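/- arXiv:math/0607800 — 8 statements merged into one kernel-verified Lean document; each statement's English description precedes it below -/
import Mathlib

section
/- Let P be a Markov kernel on a measurable space X, let f: X → [1,∞) and V: X → [1,∞) be measurable, ε ∈ (0,1), and C a measurable subset of X with sup_C f/V < ∞. Suppose there exists a stopping time τ ≥ 1 such that for all x ∉ C: E_x[Σ_{k=0}^{τ-1} f(Φ_k)] ≤ V(x) and E_x[V(Φ_τ)] ≤ (1-ε)V(x). Then for all x ∉ C, E_x[Σ_{k=0}^{τ_C} f(Φ_k)] ≤ (ε^{-1} ∨ sup_C f/V) · V(x), where τ_C = inf{k ≥ 1 : Φ_k ∈ C} is the return time to C. -/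
/-!
Truncate the sum after `n` terms. During the first `τ` steps the sum is at most `V x` on average.
At time `τ` either the chain has just returned to `C`, contributing `f(Φ_τ) ≤ B V(Φ_τ)`, or it has
not returned yet, and the rest of the sum is the truncated sum for the chain restarted at `Φ_τ`.
By the strong Markov property at `τ` and induction on `n`, with `M = ε⁻¹ ∨ B`, the truncated sum
has mean at most `V x + M E_x[V(Φ_τ)] ≤ V x + M (1 - ε) V x ≤ M V x`; monotone convergence lets
`n → ∞`. The strong Markov property is derived from the one-step Markov property by conditioning
on the events of the natural filtration, by induction on the time.
-/

open MeasureTheory ENNReal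

/-- The natural filtration on the canonical trajectory space `ℕ → X`:
`σ`-algebra generated by the coordinates up to time `n`. -/
noncomputable def natFiltration (X : Type) [MeasurableSpace X] (n : ℕ) :
    MeasurableSpace (ℕ → X) :=
  MeasurableSpace.comap (fun ω (i : Fin (n + 1)) => ω i) inferInstance

namespace CanonicalChain

variable {X : Type}

lemma measurable_apply_index {Y γ : Type*} [MeasurableSpace Y] [MeasurableSpace γ] {τ : Y → ℕ}
    (hτ : Measurable τ) {F : ℕ → Y → γ} (hF : ∀ m, Measurable (F m)) :
    Measurable fun y => F (τ y) y :=
  (measurable_from_prod_countable_left (f := fun p : Y × ℕ => F p.2 p.1) hF).comp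
    (measurable_id.prodMk hτ)

lemma measurableSet_setOf_mem_index {Y : Type*} [MeasurableSpace Y] {τ : Y → ℕ}
    (hτ : Measurable τ) {A : ℕ → Set Y} (hA : ∀ m, MeasurableSet (A m)) :
    MeasurableSet {y | y ∈ A (τ y)} :=
  measurableSet_setOfPred.2 (measurable_apply_index hτ fun m => measurableSet_setOfPred.1 (hA m))

def shift (n : ℕ) (ω : ℕ → X) : ℕ → X := fun k => ω (k + n)

def prepend (x : X) (ω : ℕ → X) : ℕ → X
  | 0 => x
  | k + 1 => ω k

lemma prepend_shift_one {ω : ℕ → X} {x : X} (hx : ω 0 = x) : prepend x (shift 1 ω) = ω := by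
  funext k
  cases k with
  | zero => exact hx.symm
  | succ k => rfl

-- `ω ∈ noReturnBefore C m` iff the return time `τ_C ω = inf {k ≥ 1 | ω k ∈ C}` is at least `m`;
-- thus `returnSum C f n ω` is the sum of `f (ω k)` over `k < n` with `k ≤ τ_C ω`.
def noReturnBefore (C : Set X) (m : ℕ) : Set (ℕ → X) := {ω | ∀ j, 1 ≤ j → j < m → ω j ∉ C}

lemma noReturnBefore_anti (C : Set X) : Antitone (noReturnBefore C) :=
  fun _ _ hmn _ hω j hj1 hjm => hω j hj1 (lt_of_lt_of_le hjm hmn)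

lemma shift_mem_noReturnBefore_iff {C : Set X} {ω : ℕ → X} {t : ℕ} (ht : 1 ≤ t)
    (hω : ω ∈ noReturnBefore C t) (hωt : ω t ∉ C) (k : ℕ) :
    shift t ω ∈ noReturnBefore C k ↔ ω ∈ noReturnBefore C (t + k) := by
  refine ⟨fun h j hj1 hjk => ?_, fun h j hj1 hjk => h (j + t) (by omega) (by omega)⟩
  rcases lt_trichotomy j t with hjt | rfl | hjt
  · exact hω j hj1 hjt
  · exact hωt
  · simpa [shift, Nat.sub_add_cancel hjt.le] using h (j - t) (by omega) (by omega)

noncomputable def returnSum (C : Set X) (f : X → ℝ) (n : ℕ) (ω : ℕ → X) : ℝ≥0∞ :=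
  ∑ k ∈ Finset.range n, (noReturnBefore C k).indicator (fun ω => ENNReal.ofReal (f (ω k))) ω

lemma returnSum_succ_le (C : Set X) (f : X → ℝ) {t : ℕ} (ht : 1 ≤ t) (n : ℕ) (ω : ℕ → X) :
    returnSum C f (n + 1) ω ≤ ∑ k ∈ Finset.range t, ENNReal.ofReal (f (ω k))
      + (noReturnBefore C t ∩ {ω | ω t ∈ C}).indicator (fun ω => ENNReal.ofReal (f (ω t))) ω
      + (noReturnBefore C t \ {ω | ω t ∈ C}).indicator
          (fun ω => returnSum C f n (shift t ω)) ω := by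
  set term := fun k => (noReturnBefore C k).indicator (fun ω => ENNReal.ofReal (f (ω k))) ω
  have hsplit : returnSum C f (n + 1) ω ≤ ∑ k ∈ Finset.range t, term k
      + ∑ k ∈ Finset.range n, term (t + k) := by
    rw [← Finset.sum_range_add]
    exact Finset.sum_le_sum_of_subset (Finset.range_subset_range.2 (by omega))
  have hhead : ∑ k ∈ Finset.range t, term k ≤ ∑ k ∈ Finset.range t, ENNReal.ofReal (f (ω k)) :=
    Finset.sum_le_sum fun k _ => Set.indicator_le_self _ _ _
  rw [add_assoc]
  refine hsplit.trans (add_le_add hhead ?_)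
  -- Either `C` was visited before `t` (no later term counts), or the first return is at `t`
  -- (only the term `t` counts), or there is no return up to `t` (the shifted path takes over).
  by_cases hS : ω ∈ noReturnBefore C t
  swap
  · rw [Finset.sum_eq_zero fun k _ => Set.indicator_of_notMem
      (fun h => hS (noReturnBefore_anti C (Nat.le_add_right t k) h)) _]
    exact zero_le
  by_cases hCt : ω t ∈ C
  · rw [Set.indicator_of_mem (Set.mem_inter hS hCt), Set.indicator_of_notMem (fun h => h.2 hCt),
      add_zero]
    cases n with
    | zero => simp
    | succ n =>
      rw [Finset.sum_range_succ', Finset.sum_eq_zero fun k _ => Set.indicator_of_notMem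
        (fun (h : ω ∈ noReturnBefore C _) => h t ht (by omega) hCt) _, zero_add]
      exact Set.indicator_le_self _ _ _
  · rw [Set.indicator_of_notMem (fun h => hCt h.2), zero_add,
      Set.indicator_of_mem (Set.mem_sdiff_of_mem hS hCt)]
    refine (Finset.sum_congr rfl fun k _ => ?_).le
    have hiff := shift_mem_noReturnBefore_iff ht hS hCt k
    simp only [term]
    by_cases hk : ω ∈ noReturnBefore C (t + k)
    · rw [Set.indicator_of_mem hk, Set.indicator_of_mem (hiff.2 hk), shift, Nat.add_comm k t]
    · rw [Set.indicator_of_notMem hk, Set.indicator_of_notMem (mt hiff.1 hk)]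

lemma monotone_returnSum (C : Set X) (f : X → ℝ) : Monotone (returnSum C f) :=
  fun _ _ hmn _ => Finset.sum_le_sum_of_subset (Finset.range_subset_range.2 hmn)

variable [MeasurableSpace X]

lemma measurable_shift (n : ℕ) : Measurable (shift (X := X) n) :=
  measurable_pi_lambda _ fun k => measurable_pi_apply (k + n)

lemma natFiltration_le (n : ℕ) : natFiltration X n ≤ (inferInstance : MeasurableSpace (ℕ → X)) :=
  (measurable_pi_lambda _ fun _ => measurable_pi_apply _).comap_le

lemma measurable_natFiltration_apply {n j : ℕ} (hj : j ≤ n) :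
    Measurable[natFiltration X n] fun ω : ℕ → X => ω j :=
  fun _ hs => ⟨_, measurable_pi_apply (⟨j, by omega⟩ : Fin (n + 1)) hs, rfl⟩

lemma measurable_prepend (x : X) : Measurable (prepend x) :=
  measurable_pi_lambda _ fun
    | 0 => measurable_const
    | k + 1 => measurable_pi_apply k

lemma measurable_prepend_natFiltration (x : X) (n : ℕ) :
    Measurable[natFiltration X n, natFiltration X (n + 1)] (prepend x) := by
  have h : Measurable[natFiltration X n] fun ω (i : Fin (n + 2)) => prepend x ω i :=
    @measurable_pi_lambda _ _ _ (natFiltration X n) _ _ fun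
      | ⟨0, _⟩ => measurable_const
      | ⟨j + 1, hj⟩ => measurable_natFiltration_apply (by omega)
  refine measurable_iff_comap_le.2 ?_
  unfold natFiltration
  rw [MeasurableSpace.comap_comp]
  exact h.comap_le

lemma mem_iff_of_natFiltration_zero {D : Set (ℕ → X)} (hD : MeasurableSet[natFiltration X 0] D)
    {ω ω' : ℕ → X} (h : ω 0 = ω' 0) : ω ∈ D ↔ ω' ∈ D := by
  obtain ⟨s, -, rfl⟩ := hD
  have : (fun i : Fin (0 + 1) => ω i) = fun i : Fin (0 + 1) => ω' i :=
    funext fun i => by rw [Fin.fin_one_eq_zero i]; exact h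
  simp only [Set.mem_preimage, this]

lemma measurableSet_noReturnBefore {C : Set X} (hC : MeasurableSet C) (m : ℕ) :
    MeasurableSet[natFiltration X m] (noReturnBefore C m) := by
  simp only [noReturnBefore, Set.ofPred_forall]
  exact .iInter fun j => .iInter fun _ => .iInter fun hj =>
    (measurable_natFiltration_apply hj.le) hC.compl

lemma measurable_returnSum {C : Set X} (hC : MeasurableSet C) {f : X → ℝ} (hf : Measurable f)
    (n : ℕ) : Measurable (returnSum C f n) :=
  Finset.measurable_sum _ fun k _ => ((hf.comp (measurable_pi_apply k)).ennreal_ofReal).indicator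
    (natFiltration_le k _ (measurableSet_noReturnBefore hC k))

lemma measurable_of_measurableSet_natFiltration_eq {τ : (ℕ → X) → ℕ}
    (hτ : ∀ m, MeasurableSet[natFiltration X m] {ω | τ ω = m}) : Measurable τ :=
  measurable_to_countable' fun m => natFiltration_le m _ (hτ m)

lemma lintegral_returnSum_succ_le {μ : Measure (ℕ → X)} {C : Set X} (hC : MeasurableSet C)
    {f : X → ℝ} (hf : Measurable f) {τ : (ℕ → X) → ℕ} (hτ : Measurable τ) (hτ1 : ∀ ω, 1 ≤ τ ω)
    (n : ℕ) :
    ∫⁻ ω, returnSum C f (n + 1) ω ∂μ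
      ≤ ∫⁻ ω, ∑ k ∈ Finset.range (τ ω), ENNReal.ofReal (f (ω k)) ∂μ
        + ∫⁻ ω in {ω | ω ∈ noReturnBefore C (τ ω)} ∩ {ω | ω (τ ω) ∈ C},
            ENNReal.ofReal (f (ω (τ ω))) ∂μ
        + ∫⁻ ω in {ω | ω ∈ noReturnBefore C (τ ω)} \ {ω | ω (τ ω) ∈ C},
            returnSum C f n (shift (τ ω) ω) ∂μ := by
  set S : Set (ℕ → X) := {ω | ω ∈ noReturnBefore C (τ ω)}
  set H : Set (ℕ → X) := {ω | ω (τ ω) ∈ C}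
  have hS : MeasurableSet S := measurableSet_setOf_mem_index hτ fun m =>
    natFiltration_le m _ (measurableSet_noReturnBefore hC m)
  have hH : MeasurableSet H := measurableSet_setOf_mem_index (A := fun m => {ω | ω m ∈ C}) hτ
    fun m => measurable_pi_apply m hC
  have hsum : Measurable fun ω => ∑ k ∈ Finset.range (τ ω), ENNReal.ofReal (f (ω k)) :=
    measurable_apply_index hτ fun m => Finset.measurable_sum _ fun k _ =>
      (hf.comp (measurable_pi_apply k)).ennreal_ofReal
  have hreturn : Measurable ((S ∩ H).indicator fun ω => ENNReal.ofReal (f (ω (τ ω)))) :=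
    (measurable_apply_index (F := fun m ω => ENNReal.ofReal (f (ω m))) hτ fun m =>
      (hf.comp (measurable_pi_apply m)).ennreal_ofReal).indicator (hS.inter hH)
  calc ∫⁻ ω, returnSum C f (n + 1) ω ∂μ
      ≤ ∫⁻ ω, (∑ k ∈ Finset.range (τ ω), ENNReal.ofReal (f (ω k))
          + (S ∩ H).indicator (fun ω => ENNReal.ofReal (f (ω (τ ω)))) ω
          + (S \ H).indicator (fun ω => returnSum C f n (shift (τ ω) ω)) ω) ∂μ :=
        lintegral_mono fun ω => returnSum_succ_le C f (hτ1 ω) n ω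
    _ = _ := by
        rw [lintegral_add_left (f := fun ω => ∑ k ∈ Finset.range (τ ω), ENNReal.ofReal (f (ω k))
            + (S ∩ H).indicator (fun ω => ENNReal.ofReal (f (ω (τ ω)))) ω) (hsum.add hreturn),
          lintegral_add_left hsum, lintegral_indicator (hS.inter hH),
          lintegral_indicator (hS.diff hH)]

-- `ℙ x` is the law of the chain started at `x` on the path space, with `Φ_k ω = ω k`.
structure IsMarkovFamily (ℙ : X → Measure (ℕ → X)) : Prop where
  start : ∀ x, ℙ x {ω | ω 0 = x} = 1
  markov : ∀ x (G : (ℕ → X) → ℝ≥0∞), Measurable G →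
    ∫⁻ ω, G (shift 1 ω) ∂ℙ x = ∫⁻ ω, ∫⁻ ω', G ω' ∂ℙ (ω 1) ∂ℙ x

namespace IsMarkovFamily

variable {ℙ : X → Measure (ℕ → X)} [∀ x, IsProbabilityMeasure (ℙ x)]

-- `{ω | ω 0 = x}` itself need not be measurable.
lemma ae_of_start (hℙ : IsMarkovFamily ℙ) {x : X} {p : (ℕ → X) → Prop}
    (hp : MeasurableSet {ω | p ω}) (h : ∀ ω, ω 0 = x → p ω) : ∀ᵐ ω ∂ℙ x, p ω :=
  mem_ae_iff.2 <| (prob_compl_eq_zero_iff hp).2 <|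
    le_antisymm prob_le_one <| (hℙ.start x).symm.le.trans (measure_mono h)

lemma lintegral_eq_lintegral_prepend (hℙ : IsMarkovFamily ℙ) {Φ : (ℕ → X) → ℝ≥0∞}
    (hΦ : Measurable Φ) (x : X) :
    ∫⁻ ω, Φ ω ∂ℙ x = ∫⁻ ω, ∫⁻ ω', Φ (prepend x ω') ∂ℙ (ω 1) ∂ℙ x := by
  have hΦ' : Measurable (Φ ∘ prepend x) := hΦ.comp (measurable_prepend x)
  rw [← hℙ.markov x (fun ω => Φ (prepend x ω)) hΦ']
  refine lintegral_congr_ae (hℙ.ae_of_start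
    (measurableSet_eq_fun hΦ (hΦ'.comp (measurable_shift 1))) fun ω hω => ?_)
  simp [prepend_shift_one hω]

lemma setLIntegral_eq_lintegral_setLIntegral_prepend (hℙ : IsMarkovFamily ℙ)
    {D : Set (ℕ → X)} (hD : MeasurableSet D) {φ : (ℕ → X) → ℝ≥0∞} (hφ : Measurable φ) (x : X) :
    ∫⁻ ω in D, φ ω ∂ℙ x = ∫⁻ ω, ∫⁻ ω' in prepend x ⁻¹' D, φ (prepend x ω') ∂ℙ (ω 1) ∂ℙ x := by
  rw [← lintegral_indicator hD, hℙ.lintegral_eq_lintegral_prepend (hφ.indicator hD)]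
  refine lintegral_congr fun ω => ?_
  rw [← lintegral_indicator (measurable_prepend x hD)]
  rfl

-- The Markov property at time `n`, conditioned on `natFiltration X n`. It is stated with a
-- measurable majorant `g` since `y ↦ ∫⁻ ω, G ω ∂ℙ y` need not be measurable.
theorem setLIntegral_comp_shift_le (hℙ : IsMarkovFamily ℙ) {G : (ℕ → X) → ℝ≥0∞}
    (hG : Measurable G) {g : X → ℝ≥0∞} (hg : Measurable g) (hGg : ∀ y, ∫⁻ ω, G ω ∂ℙ y ≤ g y)
    (n : ℕ) : ∀ x {D}, MeasurableSet[natFiltration X n] D →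
      ∫⁻ ω in D, G (shift n ω) ∂ℙ x ≤ ∫⁻ ω in D, g (ω n) ∂ℙ x := by
  induction n with
  | zero =>
    intro x D hD
    have hDm := natFiltration_le 0 D hD
    by_cases hxD : (fun _ => x) ∈ D
    · have hae : ∀ᵐ ω ∂ℙ x, ω ∈ D := hℙ.ae_of_start hDm fun ω hω =>
        (mem_iff_of_natFiltration_zero hD hω).2 hxD
      have hg0 : ∀ᵐ ω ∂ℙ x, g (ω 0) = g x := hℙ.ae_of_start
        (measurableSet_eq_fun (hg.comp (measurable_pi_apply 0)) measurable_const)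
        fun ω hω => by rw [hω]
      rw [Measure.restrict_eq_self_of_ae_mem hae, lintegral_congr_ae hg0, lintegral_const,
        measure_univ, mul_one]
      exact hGg x
    · have hae : ∀ᵐ ω ∂ℙ x, ω ∉ D := hℙ.ae_of_start hDm.compl fun ω hω h =>
        hxD ((mem_iff_of_natFiltration_zero hD hω).1 h)
      rw [Measure.restrict_eq_zero.2 (measure_eq_zero_iff_ae_notMem.2 hae), lintegral_zero_measure]
      exact zero_le
  | succ n ih =>
    intro x D hD
    have hDm := natFiltration_le _ D hD
    calc ∫⁻ ω in D, G (shift (n + 1) ω) ∂ℙ x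
        = ∫⁻ ω, ∫⁻ ω' in prepend x ⁻¹' D, G (shift n ω') ∂ℙ (ω 1) ∂ℙ x :=
          hℙ.setLIntegral_eq_lintegral_setLIntegral_prepend hDm (hG.comp (measurable_shift _)) x
      _ ≤ ∫⁻ ω, ∫⁻ ω' in prepend x ⁻¹' D, g (ω' n) ∂ℙ (ω 1) ∂ℙ x :=
          lintegral_mono fun ω => ih (ω 1) (measurable_prepend_natFiltration x n hD)
      _ = ∫⁻ ω in D, g (ω (n + 1)) ∂ℙ x :=
          (hℙ.setLIntegral_eq_lintegral_setLIntegral_prepend (φ := fun ω => g (ω (n + 1))) hDm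
            (hg.comp (measurable_pi_apply _)) x).symm

theorem setLIntegral_comp_shift_stoppingTime_le (hℙ : IsMarkovFamily ℙ) {τ : (ℕ → X) → ℕ}
    (hτ : ∀ m, MeasurableSet[natFiltration X m] {ω | τ ω = m}) {A : ℕ → Set (ℕ → X)}
    (hA : ∀ m, MeasurableSet[natFiltration X m] (A m)) {K : Set X} (hK : MeasurableSet K)
    (hAK : ∀ ω, ω ∈ A (τ ω) → ω (τ ω) ∈ K) {G : (ℕ → X) → ℝ≥0∞} (hG : Measurable G)
    {g : X → ℝ≥0∞} (hg : Measurable g) (hGg : ∀ y ∈ K, ∫⁻ ω, G ω ∂ℙ y ≤ g y) (x : X) :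
    ∫⁻ ω in {ω | ω ∈ A (τ ω)}, G (shift (τ ω) ω) ∂ℙ x
      ≤ ∫⁻ ω in {ω | ω ∈ A (τ ω)}, g (ω (τ ω)) ∂ℙ x := by
  classical
  set D : ℕ → Set (ℕ → X) := fun m => {ω | τ ω = m} ∩ A m
  have hD : ∀ m, MeasurableSet[natFiltration X m] (D m) := fun m => (hτ m).inter (hA m)
  have hDm : ∀ m, MeasurableSet (D m) := fun m => natFiltration_le m _ (hD m)
  have hdisj : Pairwise fun m m' => Disjoint (D m) (D m') := fun m m' hmm' =>
    Set.disjoint_left.2 fun ω h h' => hmm' (h.1.symm.trans h'.1)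
  have hunion : {ω | ω ∈ A (τ ω)} = ⋃ m, D m := by
    ext ω
    simp [D]
  -- off `K` nothing is known about `G`, so compare with the majorant that is `⊤` there
  have hGg' : ∀ y, ∫⁻ ω, G ω ∂ℙ y ≤ K.piecewise g ⊤ y := fun y => by
    by_cases hy : y ∈ K
    · simpa [hy] using hGg y hy
    · simp [hy]
  rw [hunion, lintegral_iUnion hDm hdisj, lintegral_iUnion hDm hdisj]
  refine ENNReal.tsum_le_tsum fun m => ?_
  calc ∫⁻ ω in D m, G (shift (τ ω) ω) ∂ℙ x = ∫⁻ ω in D m, G (shift m ω) ∂ℙ x :=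
        setLIntegral_congr_fun (hDm m) fun ω hω => by rw [hω.1]
    _ ≤ ∫⁻ ω in D m, K.piecewise g ⊤ (ω m) ∂ℙ x :=
        hℙ.setLIntegral_comp_shift_le hG (hg.piecewise hK measurable_const) hGg' m x (hD m)
    _ = ∫⁻ ω in D m, g (ω (τ ω)) ∂ℙ x :=
        setLIntegral_congr_fun (hDm m) fun ω hω => by
          rw [← hω.1]
          exact Set.piecewise_eq_of_mem _ _ _ (hAK ω (hω.1 ▸ hω.2))

theorem setLIntegral_returnSum_shift_le (hℙ : IsMarkovFamily ℙ) {f V : X → ℝ}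
    (hf : Measurable f) (hV : Measurable V) {M : ℝ} (hM0 : 0 ≤ M) {C : Set X}
    (hC : MeasurableSet C) (hfC : ∀ y ∈ C, f y ≤ M * V y) {τ : (ℕ → X) → ℕ}
    (hτ : ∀ m, MeasurableSet[natFiltration X m] {ω | τ ω = m}) {n : ℕ}
    (hn : ∀ y ∉ C, ∫⁻ ω, returnSum C f n ω ∂ℙ y ≤ ENNReal.ofReal (M * V y)) (x : X) :
    ∫⁻ ω in {ω | ω ∈ noReturnBefore C (τ ω)} ∩ {ω | ω (τ ω) ∈ C}, ENNReal.ofReal (f (ω (τ ω))) ∂ℙ x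
      + ∫⁻ ω in {ω | ω ∈ noReturnBefore C (τ ω)} \ {ω | ω (τ ω) ∈ C},
          returnSum C f n (shift (τ ω) ω) ∂ℙ x
      ≤ ENNReal.ofReal M * ∫⁻ ω, ENNReal.ofReal (V (ω (τ ω))) ∂ℙ x := by
  have hτm := measurable_of_measurableSet_natFiltration_eq hτ
  set S : Set (ℕ → X) := {ω | ω ∈ noReturnBefore C (τ ω)}
  set H : Set (ℕ → X) := {ω | ω (τ ω) ∈ C}
  have hS : MeasurableSet S := measurableSet_setOf_mem_index hτm fun m =>
    natFiltration_le m _ (measurableSet_noReturnBefore hC m)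
  have hH : MeasurableSet H := measurableSet_setOf_mem_index (A := fun m => {ω | ω m ∈ C}) hτm
    fun m => measurable_pi_apply m hC
  have hVτ : Measurable fun ω : ℕ → X => ENNReal.ofReal (V (ω (τ ω))) :=
    measurable_apply_index (F := fun m ω => ENNReal.ofReal (V (ω m))) hτm fun m =>
      (hV.comp (measurable_pi_apply m)).ennreal_ofReal
  have hreturn : ∫⁻ ω in S ∩ H, ENNReal.ofReal (f (ω (τ ω))) ∂ℙ x
      ≤ ∫⁻ ω in S ∩ H, ENNReal.ofReal (M * V (ω (τ ω))) ∂ℙ x :=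
    setLIntegral_mono' (hS.inter hH) fun ω hω => ENNReal.ofReal_le_ofReal (hfC _ hω.2)
  have hrestart : ∫⁻ ω in S \ H, returnSum C f n (shift (τ ω) ω) ∂ℙ x
      ≤ ∫⁻ ω in S \ H, ENNReal.ofReal (M * V (ω (τ ω))) ∂ℙ x :=
    hℙ.setLIntegral_comp_shift_stoppingTime_le hτ
      (A := fun m => noReturnBefore C m \ {ω | ω m ∈ C})
      (fun m => (measurableSet_noReturnBefore hC m).diff (measurable_natFiltration_apply le_rfl hC))
      hC.compl (fun _ hω => hω.2) (measurable_returnSum hC hf n) (hV.const_mul M).ennreal_ofReal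
      hn x
  calc _ ≤ ∫⁻ ω in S ∩ H, ENNReal.ofReal (M * V (ω (τ ω))) ∂ℙ x
        + ∫⁻ ω in S \ H, ENNReal.ofReal (M * V (ω (τ ω))) ∂ℙ x := add_le_add hreturn hrestart
    _ ≤ ∫⁻ ω, ENNReal.ofReal (M * V (ω (τ ω))) ∂ℙ x := by
        rw [lintegral_inter_add_sdiff _ _ hH]
        exact setLIntegral_le_lintegral S _
    _ = ENNReal.ofReal M * ∫⁻ ω, ENNReal.ofReal (V (ω (τ ω))) ∂ℙ x := by
        simp_rw [ENNReal.ofReal_mul hM0]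
        exact lintegral_const_mul _ hVτ

theorem lintegral_returnSum_le (hℙ : IsMarkovFamily ℙ) {f V : X → ℝ} (hf : Measurable f)
    (hV : Measurable V) (hV0 : ∀ y, 0 ≤ V y) {ε M : ℝ} (hε1 : ε ≤ 1) (hM0 : 0 ≤ M)
    (hMε : 1 ≤ M * ε) {C : Set X} (hC : MeasurableSet C) (hfC : ∀ y ∈ C, f y ≤ M * V y)
    {τ : (ℕ → X) → ℕ} (hτ1 : ∀ ω, 1 ≤ τ ω)
    (hτ : ∀ m, MeasurableSet[natFiltration X m] {ω | τ ω = m})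
    (hdrift1 : ∀ x ∉ C,
      ∫⁻ ω, ∑ k ∈ Finset.range (τ ω), ENNReal.ofReal (f (ω k)) ∂ℙ x ≤ ENNReal.ofReal (V x))
    (hdrift2 : ∀ x ∉ C,
      ∫⁻ ω, ENNReal.ofReal (V (ω (τ ω))) ∂ℙ x ≤ ENNReal.ofReal ((1 - ε) * V x)) (n : ℕ) :
    ∀ x ∉ C, ∫⁻ ω, returnSum C f n ω ∂ℙ x ≤ ENNReal.ofReal (M * V x) := by
  induction n with
  | zero => simp [returnSum]
  | succ n ih =>
    intro x hx
    have hτm := measurable_of_measurableSet_natFiltration_eq hτ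
    calc _ ≤ _ := lintegral_returnSum_succ_le hC hf hτm hτ1 n
      _ ≤ ENNReal.ofReal (V x) + ENNReal.ofReal M * ENNReal.ofReal ((1 - ε) * V x) := by
          rw [add_assoc]
          refine add_le_add (hdrift1 x hx) ?_
          exact (hℙ.setLIntegral_returnSum_shift_le hf hV hM0 hC hfC hτ ih x).trans
            (mul_le_mul_right (hdrift2 x hx) _)
      _ ≤ ENNReal.ofReal (M * V x) := by
          rw [← ENNReal.ofReal_mul hM0, ← ENNReal.ofReal_add (hV0 x)
            (mul_nonneg hM0 (mul_nonneg (by linarith) (hV0 x)))]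
          exact ENNReal.ofReal_le_ofReal (by nlinarith [hV0 x])

end IsMarkovFamily

end CanonicalChain

open CanonicalChain

theorem stmt6_general
    (X : Type) [MeasurableSpace X]
    (ℙ : X → Measure (ℕ → X)) (hprob : ∀ x, IsProbabilityMeasure (ℙ x))
    (hstart : ∀ x, (ℙ x) {ω | ω 0 = x} = 1)
    (hMarkov : ∀ (x : X) (n : ℕ) (G : (ℕ → X) → ℝ≥0∞), Measurable G →
      (∫⁻ ω, G (fun k => ω (k + n)) ∂ℙ x)
        = ∫⁻ ω, (∫⁻ ω', G ω' ∂ℙ (ω n)) ∂ℙ x)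
    (f V : X → ℝ) (hf : Measurable f) (hV : Measurable V)
    (hV1 : ∀ y, 1 ≤ V y)
    (ε : ℝ) (hε0 : 0 < ε) (hε1 : ε < 1)
    (C : Set X) (hC : MeasurableSet C)
    (B : ℝ) (hB : ∀ y ∈ C, f y / V y ≤ B)
    (τ : (ℕ → X) → ℕ) (hτ1 : ∀ ω, 1 ≤ τ ω)
    (hτstop : ∀ n, MeasurableSet[natFiltration X n] {ω | τ ω = n})
    (hdrift1 : ∀ x ∉ C,
      (∫⁻ ω, ∑ k ∈ Finset.range (τ ω), ENNReal.ofReal (f (ω k)) ∂ℙ x)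
        ≤ ENNReal.ofReal (V x))
    (hdrift2 : ∀ x ∉ C,
      (∫⁻ ω, ENNReal.ofReal (V (ω (τ ω))) ∂ℙ x) ≤ ENNReal.ofReal ((1 - ε) * V x)) :
    ∀ x ∉ C,
      (∫⁻ ω, ∑' k : ℕ,
          Set.indicator {k' : ℕ | ∀ j, 1 ≤ j → j < k' → ω j ∉ C}
            (fun k' => ENNReal.ofReal (f (ω k'))) k ∂ℙ x)
        ≤ ENNReal.ofReal (max ε⁻¹ B * V x) := by
  intro x hx
  have := hprob
  have hℙ : IsMarkovFamily ℙ := ⟨hstart, fun x => hMarkov x 1⟩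
  have hV0 : ∀ y, 0 ≤ V y := fun y => zero_le_one.trans (hV1 y)
  have hM0 : 0 ≤ max ε⁻¹ B := (inv_pos.2 hε0).le.trans (le_max_left _ _)
  have hMε : 1 ≤ max ε⁻¹ B * ε :=
    (inv_mul_cancel₀ hε0.ne').symm.le.trans (mul_le_mul_of_nonneg_right (le_max_left _ _) hε0.le)
  have hfC : ∀ y ∈ C, f y ≤ max ε⁻¹ B * V y := fun y hy =>
    ((div_le_iff₀ (zero_lt_one.trans_le (hV1 y))).1 (hB y hy)).trans
      (mul_le_mul_of_nonneg_right (le_max_right _ _) (hV0 y))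
  calc _ = ∫⁻ ω, ⨆ n, returnSum C f n ω ∂ℙ x := lintegral_congr fun ω => ENNReal.tsum_eq_iSup_nat
    _ = ⨆ n, ∫⁻ ω, returnSum C f n ω ∂ℙ x :=
        lintegral_iSup (measurable_returnSum hC hf) (monotone_returnSum C f)
    _ ≤ _ := iSup_le fun n => hℙ.lintegral_returnSum_le hf hV hV0 hε1.le hM0 hMε hC hfC hτ1 hτstop
        hdrift1 hdrift2 n x hx

/-- State-dependent drift: if a Markov chain `Φ` (canonical chain `Φ_k(ω) = ω k` under
the family of laws `ℙ x`) admits a stopping time `τ ≥ 1` with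
`E_x[Σ_{k<τ} f(Φ_k)] ≤ V(x)` and `E_x[V(Φ_τ)] ≤ (1-ε)V(x)` for `x ∉ C`, and
`sup_C f/V ≤ B`, then for all `x ∉ C`,
`E_x[Σ_{k=0}^{τ_C} f(Φ_k)] ≤ (ε⁻¹ ∨ B) V(x)`, where `τ_C` is the return time to `C`
(a term of the sum is counted iff `k ≤ τ_C`, i.e. no `j` with `1 ≤ j < k` has `Φ_j ∈ C`). -/
theorem stmt6
    (X : Type) [MeasurableSpace X]
    (ℙ : X → Measure (ℕ → X)) (hprob : ∀ x, IsProbabilityMeasure (ℙ x))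
    (hstart : ∀ x, (ℙ x) {ω | ω 0 = x} = 1)
    (hMarkov : ∀ (x : X) (n : ℕ) (G : (ℕ → X) → ℝ≥0∞), Measurable G →
      (∫⁻ ω, G (fun k => ω (k + n)) ∂ℙ x)
        = ∫⁻ ω, (∫⁻ ω', G ω' ∂ℙ (ω n)) ∂ℙ x)
    (f V : X → ℝ) (hf : Measurable f) (hV : Measurable V)
    (hf1 : ∀ y, 1 ≤ f y) (hV1 : ∀ y, 1 ≤ V y)
    (ε : ℝ) (hε0 : 0 < ε) (hε1 : ε < 1)
    (C : Set X) (hC : MeasurableSet C)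
    (B : ℝ) (hB : ∀ y ∈ C, f y / V y ≤ B)
    (τ : (ℕ → X) → ℕ) (hτ1 : ∀ ω, 1 ≤ τ ω)
    (hτstop : ∀ n, MeasurableSet[natFiltration X n] {ω | τ ω = n})
    (hdrift1 : ∀ x ∉ C,
      (∫⁻ ω, ∑ k ∈ Finset.range (τ ω), ENNReal.ofReal (f (ω k)) ∂ℙ x)
        ≤ ENNReal.ofReal (V x))
    (hdrift2 : ∀ x ∉ C,
      (∫⁻ ω, ENNReal.ofReal (V (ω (τ ω))) ∂ℙ x) ≤ ENNReal.ofReal ((1 - ε) * V x)) :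
    ∀ x ∉ C,
      (∫⁻ ω, ∑' k : ℕ,
          Set.indicator {k' : ℕ | ∀ j, 1 ≤ j → j < k' → ω j ∉ C}
            (fun k' => ENNReal.ofReal (f (ω k'))) k ∂ℙ x)
        ≤ ENNReal.ofReal (max ε⁻¹ B * V x) :=
  stmt6_general X ℙ hprob hstart hMarkov f V hf hV hV1 ε hε0 hε1 C hC B hB τ hτ1 hτstop hdrift1
    hdrift2
end

section
/- Under the hypotheses of the state-dependent drift proposition (stopping time τ ≥ 1 with E_x[Σ_{k=0}^{τ-1} f(Φ_k)] ≤ V(x) and E_x[V(Φ_τ)] ≤ (1-ε)V(x) for x ∉ C, sup_C f/V < ∞), if additionally sup_{x∈C} { f(x) + E_x[V(Φ_1)] } < ∞, then sup_{x∈C} E_x[ Σ_{k=0}^{τ_C} f(Φ_k) ] < ∞. -/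
open MeasureTheory ENNReal

/-!
Let `G = Σ_{m=0}^{σ_C} f(Φ_m)`, where `σ_C` is the first hitting time of `C` at times `≥ 0`,
and `c = max B 0 + ε⁻¹`. Then `E_y G ≤ c V(y)` for every `y`, by induction on the number of terms
of `G`: from `y ∈ C` only `f(y) ≤ B V(y)` is counted; from `y ∉ C` split the path at `τ ≥ 1`,
so that `E_y G ≤ V(y) + c E_y V(Φ_τ) ≤ V(y) + c (1 - ε) V(y) ≤ c V(y)` by the strong Markov
property at `τ` (which follows from the one-step Markov property by decomposing over
`{τ = n}`). Finally `Σ_{k=0}^{τ_C} f(Φ_k) = f(Φ_0) + G ∘ θ_1`, whose expectation from `x` is at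
most `f(x) + c E_x V(Φ_1)`.
-/

namespace PathSpace

variable {X : Type}

def shift (n : ℕ) (ω : ℕ → X) : ℕ → X := fun k => ω (k + n)

def cons (y : X) (ω : ℕ → X) : ℕ → X
  | 0 => y
  | k + 1 => ω k

lemma cons_shift_one {ω : ℕ → X} {y : X} (hω : ω 0 = y) : cons y (shift 1 ω) = ω := by
  funext k; cases k <;> simp [cons, shift, hω]

open Classical in
/-- `∑' m, hitTerm F C m ω` is `Σ_{m=0}^{σ_C} F(ω m)`, `σ_C` the first hitting time of `C`. -/
noncomputable def hitTerm (F : X → ℝ≥0∞) (C : Set X) (m : ℕ) (ω : ℕ → X) : ℝ≥0∞ :=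
  if ∀ j < m, ω j ∉ C then F (ω m) else 0

section hitTerm

variable {F : X → ℝ≥0∞} {C : Set X}

lemma hitTerm_zero (ω : ℕ → X) : hitTerm F C 0 ω = F (ω 0) :=
  if_pos fun j hj => absurd hj j.not_lt_zero

lemma hitTerm_le (m : ℕ) (ω : ℕ → X) : hitTerm F C m ω ≤ F (ω m) := by
  unfold hitTerm
  split_ifs <;> simp

lemma hitTerm_succ_of_mem {ω : ℕ → X} (h : ω 0 ∈ C) (m : ℕ) : hitTerm F C (m + 1) ω = 0 :=
  if_neg fun hω => hω 0 m.succ_pos h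

lemma hitTerm_add_le (t m : ℕ) (ω : ℕ → X) :
    hitTerm F C (t + m) ω ≤ hitTerm F C m (shift t ω) := by
  by_cases h : ∀ j < t + m, ω j ∉ C
  · rw [hitTerm, if_pos h, hitTerm,
      if_pos (show ∀ j < m, shift t ω j ∉ C from fun j hj => h (j + t) (by omega))]
    simp [shift, add_comm]
  · rw [hitTerm, if_neg h]
    exact zero_le

lemma sum_range_hitTerm_le_of_mem {ω : ℕ → X} (h : ω 0 ∈ C) (N : ℕ) :
    ∑ m ∈ Finset.range N, hitTerm F C m ω ≤ F (ω 0) := by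
  cases N with
  | zero => simp
  | succ N =>
    rw [Finset.sum_range_succ', Finset.sum_eq_zero fun m _ => hitTerm_succ_of_mem h m, zero_add,
      hitTerm_zero]

lemma sum_range_succ_hitTerm_le {t : ℕ} (ht : 1 ≤ t) (N : ℕ) (ω : ℕ → X) :
    ∑ m ∈ Finset.range (N + 1), hitTerm F C m ω
      ≤ ∑ k ∈ Finset.range t, F (ω k) + ∑ m ∈ Finset.range N, hitTerm F C m (shift t ω) :=
  calc ∑ m ∈ Finset.range (N + 1), hitTerm F C m ω
      ≤ ∑ m ∈ Finset.range (t + N), hitTerm F C m ω :=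
        Finset.sum_le_sum_of_subset (Finset.range_subset_range.2 (by omega))
    _ = ∑ k ∈ Finset.range t, hitTerm F C k ω + ∑ m ∈ Finset.range N, hitTerm F C (t + m) ω :=
        Finset.sum_range_add ..
    _ ≤ _ := add_le_add (Finset.sum_le_sum fun k _ => hitTerm_le k ω)
        (Finset.sum_le_sum fun m _ => hitTerm_add_le t m ω)

lemma tsum_indicator_eq_add_tsum_hitTerm_shift (ω : ℕ → X) :
    ∑' k, {k | ∀ j, 1 ≤ j → j < k → ω j ∉ C}.indicator (fun k => F (ω k)) k
      = F (ω 0) + ∑' m, hitTerm F C m (shift 1 ω) := by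
  rw [tsum_eq_zero_add' ENNReal.summable, Set.indicator_of_mem fun j h1 h0 => absurd h0 (by omega)]
  congr 1
  refine tsum_congr fun m => ?_
  have : m + 1 ∈ {k | ∀ j, 1 ≤ j → j < k → ω j ∉ C} ↔ ∀ j < m, shift 1 ω j ∉ C :=
    ⟨fun h j hj => h (j + 1) (by omega) (by omega), fun h j h1 hj => by
      obtain ⟨i, rfl⟩ : ∃ i, j = i + 1 := ⟨j - 1, by omega⟩
      exact h i (by omega)⟩
  rw [hitTerm]
  split_ifs with h
  · exact Set.indicator_of_mem (this.2 h) _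
  · exact Set.indicator_of_notMem (mt this.1 h) _

end hitTerm

variable [MeasurableSpace X]

lemma measurable_hitTerm {F : X → ℝ≥0∞} (hF : Measurable F) {C : Set X} (hC : MeasurableSet C)
    (m : ℕ) : Measurable (hitTerm F C m) :=
  Measurable.ite (by measurability) (by fun_prop) measurable_const

@[fun_prop] lemma measurable_shift (n : ℕ) : Measurable (shift (X := X) n) :=
  measurable_pi_lambda _ fun k => measurable_pi_apply (k + n)

@[fun_prop] lemma measurable_cons (y : X) : Measurable (cons y) := by
  refine measurable_pi_lambda _ fun k => ?_
  cases k with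
  | zero => exact measurable_const
  | succ k => exact measurable_pi_apply k

lemma measurable_natFiltration_apply {n j : ℕ} (hj : j ≤ n) :
    Measurable[natFiltration X n] fun ω : ℕ → X => ω j :=
  (measurable_pi_apply (⟨j, Nat.lt_succ_of_le hj⟩ : Fin (n + 1))).comp
    (comap_measurable fun (ω : ℕ → X) (i : Fin (n + 1)) => ω i)

lemma natFiltration_le (n : ℕ) : natFiltration X n ≤ MeasurableSpace.pi :=
  (measurable_pi_lambda (fun (ω : ℕ → X) (i : Fin (n + 1)) => ω i) fun i =>
    measurable_pi_apply (i : ℕ)).comap_le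

lemma mem_iff_of_natFiltration {n : ℕ} {A : Set (ℕ → X)} (hA : MeasurableSet[natFiltration X n] A)
    {ω ω' : ℕ → X} (h : ∀ j ≤ n, ω j = ω' j) : ω ∈ A ↔ ω' ∈ A := by
  obtain ⟨S, -, rfl⟩ := hA
  have : (fun i : Fin (n + 1) => ω i) = fun i : Fin (n + 1) => ω' i :=
    funext fun i => h i (Nat.le_of_lt_succ i.2)
  simp only [Set.mem_preimage, this]

lemma measurableSet_preimage_cons {n : ℕ} {A : Set (ℕ → X)}
    (hA : MeasurableSet[natFiltration X (n + 1)] A) (y : X) :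
    MeasurableSet[natFiltration X n] (cons y ⁻¹' A) := by
  obtain ⟨S, hS, rfl⟩ := hA
  have : Measurable[natFiltration X n] fun ω (i : Fin (n + 2)) => cons y ω i := by
    refine @measurable_pi_lambda _ _ _ (natFiltration X n) _ _ fun i => ?_
    obtain ⟨_ | j, hj⟩ := i
    · exact measurable_const
    · exact measurable_natFiltration_apply (Nat.le_of_lt_succ (Nat.lt_of_succ_lt_succ hj))
  exact this hS

lemma apply_eq_tsum_indicator {α : Type*} (τ : α → ℕ) (g : ℕ → α → ℝ≥0∞) (a : α) :
    g (τ a) a = ∑' n, {a | τ a = n}.indicator (g n) a := by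
  rw [tsum_eq_single (f := fun n => {a | τ a = n}.indicator (g n) a) (τ a) fun n hn =>
    Set.indicator_of_notMem (s := {a | τ a = n}) (Ne.symm hn) (g n)]
  exact (Set.indicator_of_mem (s := {a | τ a = τ a}) rfl (g (τ a))).symm

lemma measurable_apply_of_measurable_index {α β : Type*} [MeasurableSpace α] [MeasurableSpace β]
    {τ : α → ℕ} (hτ : Measurable τ) {g : ℕ → α → β} (hg : ∀ n, Measurable (g n)) :
    Measurable fun a => g (τ a) a :=
  (measurable_from_prod_countable_left (f := fun p : α × ℕ => g p.2 p.1) hg).comp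
    (measurable_id.prodMk hτ)

structure IsMarkovFamily (ℙ : X → Measure (ℕ → X)) : Prop where
  isProbabilityMeasure (x : X) : IsProbabilityMeasure (ℙ x)
  measure_start (x : X) : ℙ x {ω | ω 0 = x} = 1
  lintegral_comp_shift_one (x : X) {G : (ℕ → X) → ℝ≥0∞} (hG : Measurable G) :
    ∫⁻ ω, G (shift 1 ω) ∂ℙ x = ∫⁻ ω, ∫⁻ ω', G ω' ∂ℙ (ω 1) ∂ℙ x

namespace IsMarkovFamily

variable {ℙ : X → Measure (ℕ → X)}

lemma ae_of_start (hℙ : IsMarkovFamily ℙ) (x : X) {s : Set (ℕ → X)} (hs : MeasurableSet s)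
    (h : ∀ ω, ω 0 = x → ω ∈ s) : ∀ᵐ ω ∂ℙ x, ω ∈ s := by
  have := hℙ.isProbabilityMeasure x
  rw [ae_iff]
  exact (prob_compl_eq_zero_iff hs).2
    (le_antisymm prob_le_one ((hℙ.measure_start x).symm.le.trans (measure_mono fun ω => h ω)))

lemma lintegral_comp_eval_zero (hℙ : IsMarkovFamily ℙ) (x : X) {g : X → ℝ≥0∞}
    (hg : Measurable g) : ∫⁻ ω, g (ω 0) ∂ℙ x = g x := by
  have := hℙ.isProbabilityMeasure x
  have : ∀ᵐ ω ∂ℙ x, g (ω 0) = g x :=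
    hℙ.ae_of_start x (measurableSet_eq_fun (by fun_prop) measurable_const) fun ω hω =>
      show g (ω 0) = g x by rw [hω]
  simp [lintegral_congr_ae this]

lemma lintegral_eq_lintegral_cons (hℙ : IsMarkovFamily ℙ) (x : X) {G : (ℕ → X) → ℝ≥0∞}
    (hG : Measurable G) : ∫⁻ ω, G ω ∂ℙ x = ∫⁻ ω, ∫⁻ ω', G (cons x ω') ∂ℙ (ω 1) ∂ℙ x := by
  have : ∀ᵐ ω ∂ℙ x, G ω = G (cons x (shift 1 ω)) :=
    hℙ.ae_of_start x (measurableSet_eq_fun hG (by fun_prop)) fun ω hω =>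
      show G ω = G (cons x (shift 1 ω)) by rw [cons_shift_one hω]
  rw [lintegral_congr_ae this]
  exact hℙ.lintegral_comp_shift_one x (G := fun ω => G (cons x ω)) (by fun_prop)

/-- Stated through a measurable majorant `W` of `z ↦ ∫⁻ H ∂ℙ z`, since that function need not be
measurable. -/
lemma lintegral_indicator_comp_shift_le (hℙ : IsMarkovFamily ℙ) {H : (ℕ → X) → ℝ≥0∞}
    (hH : Measurable H) {W : X → ℝ≥0∞} (hW : Measurable W) (hHW : ∀ z, ∫⁻ ω, H ω ∂ℙ z ≤ W z)
    (n : ℕ) (x : X) {A : Set (ℕ → X)} (hA : MeasurableSet[natFiltration X n] A) :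
    ∫⁻ ω, A.indicator (fun ω => H (shift n ω)) ω ∂ℙ x
      ≤ ∫⁻ ω, A.indicator (fun ω => W (ω n)) ω ∂ℙ x := by
  induction n generalizing x A with
  | zero =>
    have hAm : MeasurableSet A := natFiltration_le 0 _ hA
    have hmem : ∀ ω : ℕ → X, ω 0 = x → (ω ∈ A ↔ (fun _ => x) ∈ A) := fun ω hω =>
      mem_iff_of_natFiltration hA fun j hj => by rw [Nat.le_zero.1 hj, hω]
    rw [lintegral_indicator hAm, lintegral_indicator hAm]
    by_cases hxA : (fun _ => x) ∈ A
    · have hae : ∀ᵐ ω ∂ℙ x, ω ∈ A := hℙ.ae_of_start x hAm fun ω hω => (hmem ω hω).2 hxA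
      rw [Measure.restrict_eq_self_of_ae_mem hae, hℙ.lintegral_comp_eval_zero x hW]
      exact hHW x
    · have hae : ∀ᵐ ω ∂ℙ x, ω ∉ A :=
        hℙ.ae_of_start x hAm.compl fun ω hω => mt (hmem ω hω).1 hxA
      rw [Measure.restrict_eq_zero.2 (measure_eq_zero_iff_ae_notMem.2 hae),
        lintegral_zero_measure]
      exact zero_le
  | succ n ih =>
    -- seen from `x`, the event `A ∈ 𝓕_{n+1}` is the event `cons x ⁻¹' A ∈ 𝓕_n`
    -- of the path after one step
    have hAm : MeasurableSet A := natFiltration_le (n + 1) _ hA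
    calc ∫⁻ ω, A.indicator (fun ω => H (shift (n + 1) ω)) ω ∂ℙ x
        = ∫⁻ ω, ∫⁻ ω', (cons x ⁻¹' A).indicator (fun ω => H (shift n ω)) ω' ∂ℙ (ω 1) ∂ℙ x := by
          rw [hℙ.lintegral_eq_lintegral_cons x (G := A.indicator fun ω => H (shift (n + 1) ω))
            ((hH.comp (measurable_shift _)).indicator hAm)]
          simp_rw [← Set.indicator_comp_right]
          rfl
      _ ≤ ∫⁻ ω, ∫⁻ ω', (cons x ⁻¹' A).indicator (fun ω => W (ω n)) ω' ∂ℙ (ω 1) ∂ℙ x :=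
          lintegral_mono fun ω => ih (ω 1) (measurableSet_preimage_cons hA x)
      _ = ∫⁻ ω, A.indicator (fun ω => W (ω (n + 1))) ω ∂ℙ x := by
          rw [hℙ.lintegral_eq_lintegral_cons x (G := A.indicator fun ω => W (ω (n + 1)))
            ((hW.comp (measurable_pi_apply _)).indicator hAm)]
          simp_rw [← Set.indicator_comp_right]
          rfl

lemma lintegral_comp_shift_stoppingTime_le (hℙ : IsMarkovFamily ℙ) {H : (ℕ → X) → ℝ≥0∞}
    (hH : Measurable H) {W : X → ℝ≥0∞} (hW : Measurable W) (hHW : ∀ z, ∫⁻ ω, H ω ∂ℙ z ≤ W z)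
    {τ : (ℕ → X) → ℕ} (hτ : ∀ n, MeasurableSet[natFiltration X n] {ω | τ ω = n}) (x : X) :
    ∫⁻ ω, H (shift (τ ω) ω) ∂ℙ x ≤ ∫⁻ ω, W (ω (τ ω)) ∂ℙ x := by
  have hτm (n : ℕ) : MeasurableSet {ω | τ ω = n} := natFiltration_le n _ (hτ n)
  calc ∫⁻ ω, H (shift (τ ω) ω) ∂ℙ x
      = ∑' n, ∫⁻ ω, {ω | τ ω = n}.indicator (fun ω => H (shift n ω)) ω ∂ℙ x := by
        rw [← lintegral_tsum (f := fun n ω => {ω | τ ω = n}.indicator (fun ω => H (shift n ω)) ω)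
          fun n => ((hH.comp (measurable_shift n)).indicator (hτm n)).aemeasurable]
        exact lintegral_congr fun ω => apply_eq_tsum_indicator τ (fun n ω => H (shift n ω)) ω
    _ ≤ ∑' n, ∫⁻ ω, {ω | τ ω = n}.indicator (fun ω => W (ω n)) ω ∂ℙ x :=
        ENNReal.tsum_le_tsum fun n => hℙ.lintegral_indicator_comp_shift_le hH hW hHW n x (hτ n)
    _ = ∫⁻ ω, W (ω (τ ω)) ∂ℙ x := by
        rw [← lintegral_tsum (f := fun n ω => {ω | τ ω = n}.indicator (fun ω => W (ω n)) ω)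
          fun n => ((hW.comp (measurable_pi_apply n)).indicator (hτm n)).aemeasurable]
        exact lintegral_congr fun ω => (apply_eq_tsum_indicator τ (fun n ω => W (ω n)) ω).symm

variable {F W : X → ℝ≥0∞} {C : Set X} {τ : (ℕ → X) → ℕ} {c : ℝ≥0∞}

theorem lintegral_sum_range_hitTerm_le (hℙ : IsMarkovFamily ℙ) (hF : Measurable F)
    (hW : Measurable W) (hC : MeasurableSet C) (hτ1 : ∀ ω, 1 ≤ τ ω)
    (hτ : ∀ n, MeasurableSet[natFiltration X n] {ω | τ ω = n})
    (hin : ∀ y ∈ C, F y ≤ c * W y)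
    (hout : ∀ y ∉ C, ∫⁻ ω, ∑ k ∈ Finset.range (τ ω), F (ω k) ∂ℙ y
      + c * ∫⁻ ω, W (ω (τ ω)) ∂ℙ y ≤ c * W y) (N : ℕ) (x : X) :
    ∫⁻ ω, ∑ m ∈ Finset.range N, hitTerm F C m ω ∂ℙ x ≤ c * W x := by
  induction N generalizing x with
  | zero => simp
  | succ N ih =>
    by_cases hx : x ∈ C
    · calc ∫⁻ ω, ∑ m ∈ Finset.range (N + 1), hitTerm F C m ω ∂ℙ x
          ≤ ∫⁻ ω, F (ω 0) ∂ℙ x :=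
            lintegral_mono_ae <| (hℙ.ae_of_start x (measurable_pi_apply 0 hC) fun ω hω =>
              show ω 0 ∈ C from hω ▸ hx).mono fun ω h => sum_range_hitTerm_le_of_mem h _
        _ = F x := hℙ.lintegral_comp_eval_zero x hF
        _ ≤ c * W x := hin x hx
    · have hτm : Measurable τ := measurable_to_countable' fun n => natFiltration_le n _ (hτ n)
      have hpre : Measurable fun ω => ∑ k ∈ Finset.range (τ ω), F (ω k) :=
        measurable_apply_of_measurable_index (g := fun n ω => ∑ k ∈ Finset.range n, F (ω k)) hτm
          fun n => by fun_prop
      calc ∫⁻ ω, ∑ m ∈ Finset.range (N + 1), hitTerm F C m ω ∂ℙ x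
          ≤ ∫⁻ ω, (∑ k ∈ Finset.range (τ ω), F (ω k)
              + ∑ m ∈ Finset.range N, hitTerm F C m (shift (τ ω) ω)) ∂ℙ x :=
            lintegral_mono fun ω => sum_range_succ_hitTerm_le (hτ1 ω) N ω
        _ ≤ ∫⁻ ω, ∑ k ∈ Finset.range (τ ω), F (ω k) ∂ℙ x + ∫⁻ ω, c * W (ω (τ ω)) ∂ℙ x := by
            rw [lintegral_add_left hpre]
            exact add_le_add_right (hℙ.lintegral_comp_shift_stoppingTime_le
              (Finset.measurable_sum _ fun m _ => measurable_hitTerm hF hC m) (hW.const_mul c)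
              ih hτ x) _
        _ ≤ c * W x := by
            rw [lintegral_const_mul c (measurable_apply_of_measurable_index
              (g := fun n ω => W (ω n)) hτm fun n => by fun_prop)]
            exact hout x hx

theorem lintegral_tsum_hitTerm_le (hℙ : IsMarkovFamily ℙ) (hF : Measurable F)
    (hW : Measurable W) (hC : MeasurableSet C) (hτ1 : ∀ ω, 1 ≤ τ ω)
    (hτ : ∀ n, MeasurableSet[natFiltration X n] {ω | τ ω = n})
    (hin : ∀ y ∈ C, F y ≤ c * W y)
    (hout : ∀ y ∉ C, ∫⁻ ω, ∑ k ∈ Finset.range (τ ω), F (ω k) ∂ℙ y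
      + c * ∫⁻ ω, W (ω (τ ω)) ∂ℙ y ≤ c * W y) (x : X) :
    ∫⁻ ω, ∑' m, hitTerm F C m ω ∂ℙ x ≤ c * W x := by
  rw [lintegral_tsum fun m => (measurable_hitTerm hF hC m).aemeasurable]
  refine ENNReal.tsum_le_of_sum_range_le fun N => ?_
  rw [← lintegral_finsetSum _ fun m _ => measurable_hitTerm hF hC m]
  exact hℙ.lintegral_sum_range_hitTerm_le hF hW hC hτ1 hτ hin hout N x

theorem lintegral_tsum_returnTime_le (hℙ : IsMarkovFamily ℙ) (hF : Measurable F)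
    (hW : Measurable W) (hC : MeasurableSet C) (hτ1 : ∀ ω, 1 ≤ τ ω)
    (hτ : ∀ n, MeasurableSet[natFiltration X n] {ω | τ ω = n})
    (hin : ∀ y ∈ C, F y ≤ c * W y)
    (hout : ∀ y ∉ C, ∫⁻ ω, ∑ k ∈ Finset.range (τ ω), F (ω k) ∂ℙ y
      + c * ∫⁻ ω, W (ω (τ ω)) ∂ℙ y ≤ c * W y) (x : X) :
    ∫⁻ ω, ∑' k, {k | ∀ j, 1 ≤ j → j < k → ω j ∉ C}.indicator (fun k => F (ω k)) k ∂ℙ x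
      ≤ F x + c * ∫⁻ ω, W (ω 1) ∂ℙ x := by
  have hG : Measurable fun ω => ∑' m, hitTerm F C m ω :=
    Measurable.tsum fun m => measurable_hitTerm hF hC m
  calc _ = ∫⁻ ω, F (ω 0) ∂ℙ x + ∫⁻ ω, ∑' m, hitTerm F C m (shift 1 ω) ∂ℙ x := by
        rw [lintegral_congr tsum_indicator_eq_add_tsum_hitTerm_shift,
          lintegral_add_left (by fun_prop)]
    _ = F x + ∫⁻ ω, ∫⁻ ω', ∑' m, hitTerm F C m ω' ∂ℙ (ω 1) ∂ℙ x := by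
        rw [hℙ.lintegral_comp_eval_zero x hF, hℙ.lintegral_comp_shift_one x hG]
    _ ≤ F x + ∫⁻ ω, c * W (ω 1) ∂ℙ x := by
        gcongr with ω
        exact hℙ.lintegral_tsum_hitTerm_le hF hW hC hτ1 hτ hin hout (ω 1)
    _ = F x + c * ∫⁻ ω, W (ω 1) ∂ℙ x := by
        rw [lintegral_const_mul c (by fun_prop)]

end IsMarkovFamily

end PathSpace

lemma ENNReal.ofReal_add_mul_ofReal_le {ε r v : ℝ} (hε0 : 0 < ε) (hε1 : ε < 1) (hr : ε⁻¹ ≤ r)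
    (hv : 0 ≤ v) :
    ENNReal.ofReal v + ENNReal.ofReal r * ENNReal.ofReal ((1 - ε) * v)
      ≤ ENNReal.ofReal r * ENNReal.ofReal v := by
  have hr0 : 0 ≤ r := (inv_pos.2 hε0).le.trans hr
  have hrε : 1 ≤ r * ε := (inv_le_iff_one_le_mul₀ hε0).1 hr
  rw [← ENNReal.ofReal_mul hr0, ← ENNReal.ofReal_mul hr0,
    ← ENNReal.ofReal_add hv (mul_nonneg hr0 (mul_nonneg (by linarith) hv))]
  exact ENNReal.ofReal_le_ofReal (by nlinarith)

theorem stmt7_general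
    (X : Type) [MeasurableSpace X]
    (ℙ : X → Measure (ℕ → X)) (hprob : ∀ x, IsProbabilityMeasure (ℙ x))
    (hstart : ∀ x, (ℙ x) {ω | ω 0 = x} = 1)
    (hMarkov : ∀ (x : X) (n : ℕ) (G : (ℕ → X) → ℝ≥0∞), Measurable G →
      (∫⁻ ω, G (fun k => ω (k + n)) ∂ℙ x)
        = ∫⁻ ω, (∫⁻ ω', G ω' ∂ℙ (ω n)) ∂ℙ x)
    (f V : X → ℝ) (hf : Measurable f) (hV : Measurable V)
    (hV1 : ∀ y, 1 ≤ V y)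
    (ε : ℝ) (hε0 : 0 < ε) (hε1 : ε < 1)
    (C : Set X) (hC : MeasurableSet C)
    (B : ℝ) (hB : ∀ y ∈ C, f y / V y ≤ B)
    (τ : (ℕ → X) → ℕ) (hτ1 : ∀ ω, 1 ≤ τ ω)
    (hτstop : ∀ n, MeasurableSet[natFiltration X n] {ω | τ ω = n})
    (hdrift1 : ∀ x ∉ C,
      (∫⁻ ω, ∑ k ∈ Finset.range (τ ω), ENNReal.ofReal (f (ω k)) ∂ℙ x)
        ≤ ENNReal.ofReal (V x))
    (hdrift2 : ∀ x ∉ C,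
      (∫⁻ ω, ENNReal.ofReal (V (ω (τ ω))) ∂ℙ x) ≤ ENNReal.ofReal ((1 - ε) * V x))
    (hbound : ∃ B₂ : ℝ, ∀ x ∈ C,
      ENNReal.ofReal (f x) + (∫⁻ ω, ENNReal.ofReal (V (ω 1)) ∂ℙ x)
        ≤ ENNReal.ofReal B₂) :
    ∃ D : ℝ≥0∞, D < ⊤ ∧ ∀ x ∈ C,
      (∫⁻ ω, ∑' k : ℕ,
          Set.indicator {k' : ℕ | ∀ j, 1 ≤ j → j < k' → ω j ∉ C}
            (fun k' => ENNReal.ofReal (f (ω k'))) k ∂ℙ x)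
        ≤ D := by
  obtain ⟨B₂, hB₂⟩ := hbound
  have hℙ : PathSpace.IsMarkovFamily ℙ := ⟨hprob, hstart, fun x _ hG => hMarkov x 1 _ hG⟩
  set r := max B 0 + ε⁻¹
  have hin (y : X) (hy : y ∈ C) :
      ENNReal.ofReal (f y) ≤ ENNReal.ofReal r * ENNReal.ofReal (V y) := by
    have hV0 : 0 < V y := zero_lt_one.trans_le (hV1 y)
    have hBr : B ≤ r := le_add_of_le_of_nonneg (le_max_left _ _) (inv_pos.2 hε0).le
    rw [← ENNReal.ofReal_mul' hV0.le]
    exact ENNReal.ofReal_le_ofReal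
      (((div_le_iff₀ hV0).1 (hB y hy)).trans (mul_le_mul_of_nonneg_right hBr hV0.le))
  have hout (y : X) (hy : y ∉ C) :=
    (add_le_add (hdrift1 y hy) (mul_le_mul_right (hdrift2 y hy) (ENNReal.ofReal r))).trans
      (ENNReal.ofReal_add_mul_ofReal_le hε0 hε1 (le_add_of_nonneg_left (le_max_right _ _))
        (zero_le_one.trans (hV1 y)))
  refine ⟨(ENNReal.ofReal r + 1) * ENNReal.ofReal B₂,
    mul_lt_top (by simp) ENNReal.ofReal_lt_top, fun x hx => ?_⟩
  calc _ ≤ ENNReal.ofReal (f x) + ENNReal.ofReal r * ∫⁻ ω, ENNReal.ofReal (V (ω 1)) ∂ℙ x :=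
        hℙ.lintegral_tsum_returnTime_le hf.ennreal_ofReal hV.ennreal_ofReal hC hτ1 hτstop hin hout x
    _ ≤ (ENNReal.ofReal r + 1)
          * (ENNReal.ofReal (f x) + ∫⁻ ω, ENNReal.ofReal (V (ω 1)) ∂ℙ x) := by
        rw [mul_add]
        exact add_le_add (le_mul_of_one_le_left' le_add_self) (mul_le_mul_left le_self_add _)
    _ ≤ (ENNReal.ofReal r + 1) * ENNReal.ofReal B₂ := mul_le_mul_right (hB₂ x hx) _

/-- Under the hypotheses of the state-dependent drift proposition, if additionally
`sup_{x∈C} {f(x) + E_x[V(Φ_1)]} < ∞`, then `sup_{x∈C} E_x[Σ_{k=0}^{τ_C} f(Φ_k)] < ∞`. -/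
theorem stmt7
    (X : Type) [MeasurableSpace X]
    (ℙ : X → Measure (ℕ → X)) (hprob : ∀ x, IsProbabilityMeasure (ℙ x))
    (hstart : ∀ x, (ℙ x) {ω | ω 0 = x} = 1)
    (hMarkov : ∀ (x : X) (n : ℕ) (G : (ℕ → X) → ℝ≥0∞), Measurable G →
      (∫⁻ ω, G (fun k => ω (k + n)) ∂ℙ x)
        = ∫⁻ ω, (∫⁻ ω', G ω' ∂ℙ (ω n)) ∂ℙ x)
    (f V : X → ℝ) (hf : Measurable f) (hV : Measurable V)
    (hf1 : ∀ y, 1 ≤ f y) (hV1 : ∀ y, 1 ≤ V y)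
    (ε : ℝ) (hε0 : 0 < ε) (hε1 : ε < 1)
    (C : Set X) (hC : MeasurableSet C)
    (B : ℝ) (hB : ∀ y ∈ C, f y / V y ≤ B)
    (τ : (ℕ → X) → ℕ) (hτ1 : ∀ ω, 1 ≤ τ ω)
    (hτstop : ∀ n, MeasurableSet[natFiltration X n] {ω | τ ω = n})
    (hdrift1 : ∀ x ∉ C,
      (∫⁻ ω, ∑ k ∈ Finset.range (τ ω), ENNReal.ofReal (f (ω k)) ∂ℙ x)
        ≤ ENNReal.ofReal (V x))
    (hdrift2 : ∀ x ∉ C,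
      (∫⁻ ω, ENNReal.ofReal (V (ω (τ ω))) ∂ℙ x) ≤ ENNReal.ofReal ((1 - ε) * V x))
    (hbound : ∃ B₂ : ℝ, ∀ x ∈ C,
      ENNReal.ofReal (f x) + (∫⁻ ω, ENNReal.ofReal (V (ω 1)) ∂ℙ x)
        ≤ ENNReal.ofReal B₂) :
    ∃ D : ℝ≥0∞, D < ⊤ ∧ ∀ x ∈ C,
      (∫⁻ ω, ∑' k : ℕ,
          Set.indicator {k' : ℕ | ∀ j, 1 ≤ j → j < k' → ω j ∉ C}
            (fun k' => ENNReal.ofReal (f (ω k'))) k ∂ℙ x)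
        ≤ D :=
  stmt7_general X ℙ hprob hstart hMarkov f V hf hV hV1 ε hε0 hε1 C hC B hB τ hτ1 hτstop hdrift1
    hdrift2 hbound
end

section
/- Let {Φ_k} be a Markov chain satisfying Φ_{k+1} = Φ_k + Δ(Φ_k) + ε_{k+1} where {ε_k} is a martingale difference sequence and Δ satisfies N(β,Δ) = sup_x (1+|x|^β)|Δ(x)| < ∞ for some β ∈ [0,1). Then for all κ > 0 and integers J < K, almost surely sup_{0≤k≤k+j≤K, 0≤j≤J} |Φ_{k+j} − Φ_k| ≤ 8 M_∞(ε,K) + 2 N(β,Δ) κ^{-β} J + N(β,Δ) + 2κ, where M_∞(ε,n) = sup_{1≤l≤n} |Σ_{k=1}^l ε_k|. -/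
/-!
Telescoping the recursion writes `Φ b - Φ a` as the sum of the drifts `Δ (Φ i)`, `a ≤ i < b`,
plus an increment of the noise partial sums, which is at most `2 M`. The drift is at most `N`
everywhere and at most `N κ^(-β)` outside the ball of radius `κ`. If the chain avoids the ball on
`[a, b)` this already gives the bound; otherwise split `[a, b]` at the first and last visits
`σ ≤ τ` to the ball: `‖Φ τ - Φ σ‖ ≤ 2κ`, and on `[a, σ)` and `[τ, b)` every drift except the one
at `τ` is at most `N κ^(-β)`.
-/

open Finset

lemma norm_le_of_one_add_rpow_mul_norm_le {E F : Type*} [NormedAddCommGroup E]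
    [NormedAddCommGroup F] {β N : ℝ} {x : E} {y : F} (h : (1 + ‖x‖ ^ β) * ‖y‖ ≤ N) :
    ‖y‖ ≤ N := by
  have : 0 ≤ ‖x‖ ^ β * ‖y‖ := by positivity
  nlinarith

lemma norm_le_mul_rpow_neg_of_le_norm {E F : Type*} [NormedAddCommGroup E]
    [NormedAddCommGroup F] {β κ N : ℝ} {x : E} {y : F} (hβ : 0 ≤ β) (hκ : 0 < κ)
    (hx : κ ≤ ‖x‖) (h : (1 + ‖x‖ ^ β) * ‖y‖ ≤ N) : ‖y‖ ≤ N * κ ^ (-β) := by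
  rw [Real.rpow_neg hκ.le, ← div_eq_mul_inv, le_div_iff₀ (by positivity)]
  have : κ ^ β ≤ ‖x‖ ^ β := Real.rpow_le_rpow hκ.le hx hβ
  nlinarith [norm_nonneg y]

lemma exists_first_last_mem_Ico {p : ℕ → Prop} [DecidablePred p] {a b : ℕ}
    (h : ∃ i ∈ Ico a b, p i) :
    ∃ σ τ, a ≤ σ ∧ σ ≤ τ ∧ τ < b ∧ p σ ∧ p τ ∧
      (∀ i ∈ Ico a σ, ¬ p i) ∧ ∀ i ∈ Ico (τ + 1) b, ¬ p i := by
  set S := (Ico a b).filter p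
  have hS : S.Nonempty := by simpa [S, Finset.filter_nonempty_iff] using h
  have hσ := mem_filter.mp (S.min'_mem hS)
  have hτ := mem_filter.mp (S.max'_mem hS)
  rw [mem_Ico] at hσ hτ
  refine ⟨S.min' hS, S.max' hS, hσ.1.1, S.min'_le _ (S.max'_mem hS), hτ.1.2, hσ.2, hτ.2,
    fun i hi hpi => ?_, fun i hi hpi => ?_⟩ <;> rw [mem_Ico] at hi
  · have := S.min'_le i (mem_filter.mpr ⟨mem_Ico.mpr ⟨hi.1, by omega⟩, hpi⟩)
    omega
  · have := S.le_max' i (mem_filter.mpr ⟨mem_Ico.mpr ⟨by omega, hi.2⟩, hpi⟩)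
    omega

lemma norm_sum_Ioc_le_two_mul {E : Type*} [NormedAddCommGroup E] {ε : ℕ → E} {K : ℕ} {M : ℝ}
    (hM : ∀ l ≤ K, ‖∑ i ∈ Icc 1 l, ε i‖ ≤ M) {a b : ℕ} (hab : a ≤ b) (hbK : b ≤ K) :
    ‖∑ i ∈ Ioc a b, ε i‖ ≤ 2 * M := by
  have hIcc : ∀ l, Icc 1 l = Ioc 0 l := fun l => Finset.Icc_add_one_left_eq_Ioc 0 l
  have hsplit : ∑ i ∈ Ioc a b, ε i = ∑ i ∈ Icc 1 b, ε i - ∑ i ∈ Icc 1 a, ε i := by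
    rw [hIcc, hIcc, ← sum_Ioc_consecutive _ (Nat.zero_le a) hab, add_sub_cancel_left]
  calc ‖∑ i ∈ Ioc a b, ε i‖
      ≤ ‖∑ i ∈ Icc 1 b, ε i‖ + ‖∑ i ∈ Icc 1 a, ε i‖ := hsplit ▸ norm_sub_le _ _
    _ ≤ 2 * M := by linarith [hM b hbK, hM a (hab.trans hbK)]

section Recursion

variable {E : Type*} [NormedAddCommGroup E] {Φ ε : ℕ → E} {Δ : E → E}

lemma sub_eq_sum_Ico_add_sum_Ioc (hrec : ∀ k, Φ (k + 1) = Φ k + Δ (Φ k) + ε (k + 1))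
    {a b : ℕ} (hab : a ≤ b) :
    Φ b - Φ a = ∑ i ∈ Ico a b, Δ (Φ i) + ∑ i ∈ Ioc a b, ε i := by
  induction b, hab using Nat.le_induction with
  | base => simp
  | succ b hab ih =>
    rw [sum_Ico_succ_top hab, sum_Ioc_succ_top hab, hrec b, add_sub_right_comm,
      add_sub_right_comm (Φ b), ih]
    abel

variable {K : ℕ} {M : ℝ} (hrec : ∀ k, Φ (k + 1) = Φ k + Δ (Φ k) + ε (k + 1))
  (hM : ∀ l ≤ K, ‖∑ i ∈ Icc 1 l, ε i‖ ≤ M)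
include hrec hM

lemma norm_sub_le_sum_norm_add_two_mul {a b : ℕ} (hab : a ≤ b) (hbK : b ≤ K) :
    ‖Φ b - Φ a‖ ≤ ∑ i ∈ Ico a b, ‖Δ (Φ i)‖ + 2 * M := by
  rw [sub_eq_sum_Ico_add_sum_Ioc hrec hab]
  exact (norm_add_le _ _).trans
    (add_le_add (norm_sum_le _ _) (norm_sum_Ioc_le_two_mul hM hab hbK))

lemma norm_sub_le_card_mul_add_two_mul {D κ : ℝ} (hΔout : ∀ x, κ ≤ ‖x‖ → ‖Δ x‖ ≤ D)
    {a b : ℕ} (hab : a ≤ b) (hbK : b ≤ K) (hout : ∀ i ∈ Ico a b, κ ≤ ‖Φ i‖) :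
    ‖Φ b - Φ a‖ ≤ (b - a : ℕ) * D + 2 * M := by
  refine (norm_sub_le_sum_norm_add_two_mul hrec hM hab hbK).trans (add_le_add_left ?_ _)
  simpa using sum_le_card_nsmul _ _ _ fun i hi => hΔout _ (hout i hi)

lemma norm_sub_le_of_drift_le {N D κ : ℝ} (hΔ : ∀ x, ‖Δ x‖ ≤ N)
    (hΔout : ∀ x, κ ≤ ‖x‖ → ‖Δ x‖ ≤ D) (hD : 0 ≤ D) (hκ : 0 ≤ κ)
    {a b : ℕ} (hab : a ≤ b) (hbK : b ≤ K) :
    ‖Φ b - Φ a‖ ≤ 4 * M + (b - a : ℕ) * D + N + 2 * κ := by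
  have hM0 : 0 ≤ M := by simpa using hM 0 (Nat.zero_le K)
  have hN0 : 0 ≤ N := (norm_nonneg _).trans (hΔ 0)
  by_cases hin : ∃ i ∈ Ico a b, ‖Φ i‖ < κ
  · obtain ⟨σ, τ, haσ, hστ, hτb, hσ, hτ, hbefore, hafter⟩ := exists_first_last_mem_Ico hin
    simp only [not_lt] at hbefore hafter
    have hfirst := norm_sub_le_card_mul_add_two_mul hrec hM hΔout haσ (by omega) hbefore
    have hmiddle : ‖Φ τ - Φ σ‖ ≤ 2 * κ := by linarith [norm_sub_le (Φ τ) (Φ σ)]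
    have hlast : ‖Φ b - Φ τ‖ ≤ N + (b - (τ + 1) : ℕ) * D + 2 * M := by
      refine (norm_sub_le_sum_norm_add_two_mul hrec hM hτb.le hbK).trans ?_
      rw [sum_eq_sum_Ico_succ_bot hτb]
      have := sum_le_card_nsmul _ _ _ fun i hi => hΔout (Φ i) (hafter i hi)
      simp only [Nat.card_Ico, nsmul_eq_mul] at this
      linarith [hΔ (Φ τ)]
    have hlen : ((σ - a : ℕ) : ℝ) + (b - (τ + 1) : ℕ) ≤ (b - a : ℕ) := by
      exact_mod_cast (by omega : σ - a + (b - (τ + 1)) ≤ b - a)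
    calc ‖Φ b - Φ a‖ = ‖(Φ b - Φ τ) + (Φ τ - Φ σ) + (Φ σ - Φ a)‖ := by abel_nf
      _ ≤ ‖Φ b - Φ τ‖ + ‖Φ τ - Φ σ‖ + ‖Φ σ - Φ a‖ := norm_add₃_le
      _ ≤ 4 * M + (b - a : ℕ) * D + N + 2 * κ := by
        linarith [mul_le_mul_of_nonneg_right hlen hD]
  · simp only [not_exists, not_and, not_lt] at hin
    linarith [norm_sub_le_card_mul_add_two_mul hrec hM hΔout hab hbK hin]

end Recursion

/-- Pathwise fluctuation bound for a skip-free chain: if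
`Φ_{k+1} = Φ_k + Δ(Φ_k) + ε_{k+1}` with `sup_x (1+|x|^β)|Δ(x)| ≤ N`, `β ∈ [0,1)`,
then for all `κ > 0` and integers `J < K`,
`sup_{0≤k≤k+j≤K, j≤J} |Φ_{k+j} − Φ_k| ≤ 8 M_∞(ε,K) + 2 N κ^{-β} J + N + 2κ`,
where `M_∞(ε,n) = sup_{1≤l≤n} |Σ_{k=1}^l ε_k|`. -/
theorem stmt8 (d : ℕ)
    (Φ ε : ℕ → EuclideanSpace ℝ (Fin d))
    (Δ : EuclideanSpace ℝ (Fin d) → EuclideanSpace ℝ (Fin d))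
    (β : ℝ) (hβ0 : 0 ≤ β)
    (N : ℝ) (hN : ∀ x, (1 + ‖x‖ ^ β) * ‖Δ x‖ ≤ N)
    (hrec : ∀ k, Φ (k + 1) = Φ k + Δ (Φ k) + ε (k + 1))
    (κ : ℝ) (hκ : 0 < κ) (J K : ℕ) (hJK : J < K) :
    ∀ k j, j ≤ J → k + j ≤ K →
      ‖Φ (k + j) - Φ k‖ ≤
        8 * ((Finset.Icc 1 K).sup' (Finset.nonempty_Icc.mpr (by omega))
              fun l => ‖∑ i ∈ Finset.Icc 1 l, ε i‖)
          + 2 * N * κ ^ (-β) * (J : ℝ) + N + 2 * κ := by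
  intro k j hjJ hjK
  set M := (Icc 1 K).sup' (nonempty_Icc.mpr (by omega)) fun l => ‖∑ i ∈ Icc 1 l, ε i‖
  have hM0 : 0 ≤ M := (norm_nonneg _).trans (le_sup' (fun l => ‖∑ i ∈ Icc 1 l, ε i‖) (mem_Icc.mpr ⟨le_rfl, by omega⟩))
  have hM : ∀ l ≤ K, ‖∑ i ∈ Icc 1 l, ε i‖ ≤ M := fun l hl => by
    rcases l.eq_zero_or_pos with rfl | hl0
    · simpa using hM0
    · exact le_sup' (fun l => ‖∑ i ∈ Icc 1 l, ε i‖) (mem_Icc.mpr ⟨hl0, hl⟩)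
  have hD : 0 ≤ N * κ ^ (-β) :=
    mul_nonneg ((norm_nonneg _).trans (norm_le_of_one_add_rpow_mul_norm_le (hN 0))) (by positivity)
  have key := norm_sub_le_of_drift_le hrec hM (fun x => norm_le_of_one_add_rpow_mul_norm_le (hN x))
    (fun x hx => norm_le_mul_rpow_neg_of_le_norm hβ0 hκ hx (hN x)) hD hκ.le (k.le_add_right j) hjK
  have hj : (j : ℝ) ≤ J := by exact_mod_cast hjJ
  rw [Nat.add_sub_cancel_left] at key
  linarith [mul_le_mul_of_nonneg_right hj hD, mul_nonneg J.cast_nonneg hD]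
end

section
/- Let q be a density on R^d of the form q(x) = det(Σ)^{-1/2} q₀(Σ^{-1/2}x) where Σ is positive definite and q₀ is rotationally invariant with finite second moments. Then for any unit direction determined by a nonzero vector u ∈ R^d, ∫_{{y : ⟨y,u⟩ ≥ 0}} y q(y) dy = m₁(q₀) · Σu / |Σ^{1/2} u|, where m₁(q₀) = ∫ y₁ 1{y₁ ≥ 0} q₀(y) dy > 0. -/
/-!
Write `Σ = S²`. The substitution `y = S z` turns the half-space `⟨y, u⟩ ≥ 0` into
`⟨z, Su⟩ ≥ 0` and cancels the Jacobian `det S` against the normalisation of `q`, so it suffices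
to compute `∫_{⟨z, w⟩ ≥ 0} z q₀(z) dz` for `w = Su`. For a unit vector `w`, a Householder
reflection sending `w` to the first basis vector `e₁` reduces this to `w = e₁`; there every
coordinate `j ≠ 1` integrates to zero, because the reflection `z_j ↦ -z_j` preserves `q₀` and the
half-space. Positivity of `m₁(q₀)`: by the reflection `z₁ ↦ -z₁`, `∫ |z₁| q₀ ≤ 2 m₁(q₀)`, and
`|z₁| q₀` cannot vanish almost everywhere unless `q₀` does.
-/

open MeasureTheory Matrix

variable {ι : Type*} [Fintype ι]

theorem integral_mulVec {X : Type*} [MeasurableSpace X] {μ : Measure X} (M : Matrix ι ι ℝ)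
    {f : X → ι → ℝ} (hf : Integrable f μ) : ∫ x, M *ᵥ f x ∂μ = M *ᵥ ∫ x, f x ∂μ :=
  (LinearMap.toContinuousLinearMap (mulVecLin M)).integral_comp_comm hf

theorem preimage_mulVec_halfSpace (M : Matrix ι ι ℝ) (w : ι → ℝ) :
    M.mulVec ⁻¹' {y | 0 ≤ y ⬝ᵥ w} = {z | 0 ≤ z ⬝ᵥ Mᵀ *ᵥ w} := by
  ext z
  rw [Set.mem_preimage, Set.mem_ofPred_eq, Set.mem_ofPred_eq, dotProduct_comm,
    dotProduct_transpose_mulVec]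

theorem integrable_smul_self_of_integrable_norm_sq_mul {μ : Measure (ι → ℝ)}
    {q₀ : (ι → ℝ) → ℝ} (hnonneg : ∀ y, 0 ≤ q₀ y) (hq₀ : Integrable q₀ μ)
    (hmom : Integrable (fun y => ‖y‖ ^ 2 * q₀ y) μ) : Integrable (fun y => q₀ y • y) μ := by
  refine (hq₀.add hmom).mono' (hq₀.aestronglyMeasurable.smul aestronglyMeasurable_id)
    (ae_of_all _ fun y => ?_)
  rw [norm_smul, Real.norm_eq_abs, abs_of_nonneg (hnonneg y), Pi.add_apply]
  nlinarith [hnonneg y, sq_nonneg (‖y‖ - 1), norm_nonneg y]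

variable [DecidableEq ι]

theorem setIntegral_comp_mulVec {E : Type*} [NormedAddCommGroup E] [NormedSpace ℝ E]
    {M : Matrix ι ι ℝ} (hM : M.det ≠ 0) (f : (ι → ℝ) → E) (s : Set (ι → ℝ)) :
    ∫ y in s, f y = |M.det| • ∫ z in M.mulVec ⁻¹' s, f (M *ᵥ z) := by
  have hemb : MeasurableEmbedding (toLin' M) :=
    (LinearMap.isClosedEmbedding_of_injective
      (LinearMap.ker_eq_bot.mpr (mulVec_injective_of_det_ne_zero hM))).measurableEmbedding
  have h := hemb.setIntegral_map (μ := volume) f s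
  rw [Real.map_matrix_volume_pi_eq_smul_volume_pi hM, Measure.restrict_smul,
    integral_smul_measure, ENNReal.toReal_ofReal (abs_nonneg _)] at h
  rw [show ⇑(toLin' M) = M.mulVec from funext (toLin'_apply M)] at h
  rw [← h, smul_smul, abs_inv, mul_inv_cancel₀ (abs_ne_zero.mpr hM), one_smul]

theorem abs_det_eq_one_of_mul_transpose_eq_one {U : Matrix ι ι ℝ} (hU : U * Uᵀ = 1) :
    |U.det| = 1 := by
  have h := congrArg det hU
  rw [det_mul, det_transpose, det_one] at h
  rcases mul_self_eq_one_iff.mp h with h | h <;> simp [h]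

theorem setIntegral_comp_mulVec_of_mul_transpose_eq_one {E : Type*} [NormedAddCommGroup E]
    [NormedSpace ℝ E] {U : Matrix ι ι ℝ} (hU : U * Uᵀ = 1) (f : (ι → ℝ) → E)
    (s : Set (ι → ℝ)) : ∫ z in U.mulVec ⁻¹' s, f (U *ᵥ z) = ∫ y in s, f y := by
  have hdet := abs_det_eq_one_of_mul_transpose_eq_one hU
  rw [setIntegral_comp_mulVec (abs_ne_zero.mp (hdet ▸ one_ne_zero)) f s, hdet, one_smul]

/-- Since `2 / 0 = 0`, `householder 0 = 1`; so `householder v` is orthogonal for every `v`. -/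
noncomputable def householder (v : ι → ℝ) : Matrix ι ι ℝ :=
  1 - (2 / (v ⬝ᵥ v)) • vecMulVec v v

theorem householder_mulVec (v x : ι → ℝ) :
    householder v *ᵥ x = x - (2 * (v ⬝ᵥ x) / (v ⬝ᵥ v)) • v := by
  rw [householder, sub_mulVec, one_mulVec, smul_mulVec, vecMulVec_mulVec, op_smul_eq_smul,
    smul_smul, div_mul_eq_mul_div]

theorem householder_zero : householder (0 : ι → ℝ) = 1 := by
  simp [householder]

theorem householder_transpose (v : ι → ℝ) : (householder v)ᵀ = householder v := by
  rw [householder, transpose_sub, transpose_one, transpose_smul, transpose_vecMulVec]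

theorem householder_mul_self (v : ι → ℝ) : householder v * householder v = 1 := by
  rcases eq_or_ne v 0 with rfl | hv
  · rw [householder_zero, one_mul]
  have hvv : v ⬝ᵥ v ≠ 0 := by rwa [Ne, dotProduct_self_eq_zero]
  refine ext_iff_mulVec.mpr fun x => ?_
  have hcoeff : 2 * (v ⬝ᵥ x) / (v ⬝ᵥ v)
      + 2 * (v ⬝ᵥ x - 2 * (v ⬝ᵥ x) / (v ⬝ᵥ v) * (v ⬝ᵥ v)) / (v ⬝ᵥ v) = 0 := by
    field_simp
    ring
  rw [← mulVec_mulVec, householder_mulVec, householder_mulVec, one_mulVec, dotProduct_sub,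
    dotProduct_smul, smul_eq_mul, sub_sub, ← add_smul, hcoeff, zero_smul, sub_zero]

theorem householder_mul_transpose (v : ι → ℝ) : householder v * (householder v)ᵀ = 1 := by
  rw [householder_transpose, householder_mul_self]

theorem householder_sub_mulVec {a b : ι → ℝ} (h : a ⬝ᵥ a = b ⬝ᵥ b) :
    householder (a - b) *ᵥ a = b := by
  rcases eq_or_ne a b with rfl | hab
  · rw [sub_self, householder_zero, one_mulVec]
  have hdd : (a - b) ⬝ᵥ (a - b) ≠ 0 := by rwa [Ne, dotProduct_self_eq_zero, sub_eq_zero]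
  have hcoeff : 2 * ((a - b) ⬝ᵥ a) / ((a - b) ⬝ᵥ (a - b)) = 1 := by
    rw [div_eq_one_iff_eq hdd]
    simp only [sub_dotProduct, dotProduct_sub, dotProduct_comm b a] at hdd ⊢
    linarith
  rw [householder_mulVec, hcoeff, one_smul, sub_sub_cancel]

theorem householder_single_mulVec (j : ι) (x : ι → ℝ) :
    householder (Pi.single j 1) *ᵥ x = Function.update x j (-x j) := by
  ext i
  rcases eq_or_ne i j with rfl | hij
  · simp only [householder_mulVec, single_dotProduct, dotProduct_single, Pi.sub_apply,
      Pi.smul_apply, Pi.single_eq_same, Function.update_self]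
    ring
  · simp [householder_mulVec, hij]

section RotationInvariant

variable {q₀ : (ι → ℝ) → ℝ} (hrot : ∀ U : Matrix ι ι ℝ, U * Uᵀ = 1 → ∀ y, q₀ (U *ᵥ y) = q₀ y)
include hrot

theorem setIntegral_halfSpace_mul_coord_eq_zero {i j : ι} (hij : i ≠ j) :
    ∫ y in {y : ι → ℝ | 0 ≤ y i}, q₀ y * y j = 0 := by
  have hR := householder_mul_transpose (Pi.single j (1 : ℝ))
  have h := setIntegral_comp_mulVec_of_mul_transpose_eq_one hR (fun y => q₀ y * y j)
    {y | 0 ≤ y i}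
  have hpre : (householder (Pi.single j 1)).mulVec ⁻¹' {y : ι → ℝ | 0 ≤ y i} = {y | 0 ≤ y i} := by
    ext z
    simp [householder_single_mulVec, hij]
  simp only [hpre, hrot _ hR] at h
  simp only [householder_single_mulVec, Function.update_self, mul_neg, integral_neg] at h
  linarith

theorem setIntegral_halfSpace_smul_self_single (hint : Integrable (fun y => q₀ y • y)) (i : ι) :
    ∫ y in {y : ι → ℝ | 0 ≤ y i}, q₀ y • y
      = (∫ y in {y : ι → ℝ | 0 ≤ y i}, y i * q₀ y) • Pi.single i 1 := by
  ext j
  rw [eval_integral hint.integrableOn.eval, Pi.smul_apply]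
  rcases eq_or_ne j i with rfl | hji
  · simp [mul_comm]
  · simp [hji, setIntegral_halfSpace_mul_coord_eq_zero hrot hji.symm]

theorem setIntegral_halfSpace_smul_self_of_dotProduct_self_eq_one
    (hint : Integrable (fun y => q₀ y • y)) (i : ι) {w : ι → ℝ} (hw : w ⬝ᵥ w = 1) :
    ∫ z in {z : ι → ℝ | 0 ≤ z ⬝ᵥ w}, q₀ z • z
      = (∫ y in {y : ι → ℝ | 0 ≤ y i}, y i * q₀ y) • w := by
  set U := householder (w - Pi.single i 1)
  have hU : U * Uᵀ = 1 := householder_mul_transpose _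
  have hUw : U *ᵥ w = Pi.single i 1 := householder_sub_mulVec (by simp [hw])
  have hUe : U *ᵥ Pi.single i 1 = w := by
    rw [← hUw, mulVec_mulVec, householder_mul_self, one_mulVec]
  have hpre : U.mulVec ⁻¹' {z | 0 ≤ z ⬝ᵥ w} = {y | 0 ≤ y i} := by
    simp only [preimage_mulVec_halfSpace, U, householder_transpose, hUw, dotProduct_single,
      mul_one]
  rw [← setIntegral_comp_mulVec_of_mul_transpose_eq_one hU, hpre]
  simp only [hrot U hU, ← mulVec_smul]
  rw [integral_mulVec U hint.integrableOn, setIntegral_halfSpace_smul_self_single hrot hint,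
    mulVec_smul, hUe]

theorem setIntegral_halfSpace_smul_self (hint : Integrable (fun y => q₀ y • y)) (i : ι)
    {w : ι → ℝ} (hw : w ≠ 0) :
    ∫ z in {z : ι → ℝ | 0 ≤ z ⬝ᵥ w}, q₀ z • z
      = ((∫ y in {y : ι → ℝ | 0 ≤ y i}, y i * q₀ y) / √(w ⬝ᵥ w)) • w := by
  have hww : 0 < w ⬝ᵥ w := by simpa using dotProduct_self_star_pos_iff.mpr hw
  set r := √(w ⬝ᵥ w)
  have hr : 0 < r := Real.sqrt_pos.mpr hww
  have hset : {z : ι → ℝ | 0 ≤ z ⬝ᵥ w} = {z | 0 ≤ z ⬝ᵥ r⁻¹ • w} := by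
    ext z
    simp [dotProduct_smul, mul_nonneg_iff_of_pos_left (inv_pos.mpr hr)]
  have hunit : (r⁻¹ • w) ⬝ᵥ (r⁻¹ • w) = 1 := by
    have hr2 : r * r = w ⬝ᵥ w := Real.mul_self_sqrt hww.le
    rw [smul_dotProduct, dotProduct_smul, smul_eq_mul, smul_eq_mul, ← hr2]
    field_simp
  rw [hset, setIntegral_halfSpace_smul_self_of_dotProduct_self_eq_one hrot hint i hunit,
    smul_smul, div_eq_mul_inv]

theorem setIntegral_halfSpace_coord_mul_pos (hnonneg : ∀ y, 0 ≤ q₀ y)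
    (hint : Integrable (fun y => q₀ y • y)) (hq₀ : ¬ q₀ =ᵐ[volume] 0) (i : ι) :
    0 < ∫ y in {y : ι → ℝ | 0 ≤ y i}, y i * q₀ y := by
  set s := {y : ι → ℝ | 0 ≤ y i}
  have hs : MeasurableSet s := measurableSet_le measurable_const (measurable_pi_apply i)
  set g := fun y : ι → ℝ => |y i| * q₀ y
  have hg_nonneg : 0 ≤ g := fun y => mul_nonneg (abs_nonneg _) (hnonneg y)
  have hg : Integrable g := (hint.eval i).abs.congr (ae_of_all _ fun y => by
    simp [g, abs_mul, abs_of_nonneg (hnonneg y), mul_comm])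
  have hg_s : ∫ y in s, g y = ∫ y in s, y i * q₀ y :=
    setIntegral_congr_fun hs fun y (hy : 0 ≤ y i) => by simp [g, abs_of_nonneg hy]
  have hg_sc : ∫ y in sᶜ, g y ≤ ∫ y in s, g y := by
    have hR := householder_mul_transpose (Pi.single i (1 : ℝ))
    have hpre : (householder (Pi.single i 1)).mulVec ⁻¹' sᶜ = {y | 0 < y i} := by
      ext y
      simp [s, householder_single_mulVec]
    rw [← setIntegral_comp_mulVec_of_mul_transpose_eq_one hR, hpre]
    simp only [g, hrot _ hR]
    simp only [householder_single_mulVec, Function.update_self, abs_neg]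
    have hsub : {y : ι → ℝ | 0 < y i} ⊆ s := fun y (hy : 0 < y i) => hy.le
    exact setIntegral_mono_set hg.integrableOn (ae_of_all _ hg_nonneg) hsub.eventuallyLE
  by_contra! hm
  have hg0 : g =ᵐ[volume] 0 := by
    refine (integral_eq_zero_iff_of_nonneg hg_nonneg hg).mp
      (le_antisymm ?_ (integral_nonneg hg_nonneg))
    rw [← integral_add_compl hs hg]
    linarith
  refine hq₀ ?_
  filter_upwards [hg0, Measure.ae_eval_ne _ i 0] with y hy hyi
  exact (mul_eq_zero.mp hy).resolve_left (abs_ne_zero.mpr hyi)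

end RotationInvariant

theorem stmt10_general (d : ℕ) (hd : 0 < d)
    (q₀ : (Fin d → ℝ) → ℝ)
    (hq₀nonneg : ∀ y, 0 ≤ q₀ y) (hq₀int : (∫ y, q₀ y) = 1)
    (hrot : ∀ U : Matrix (Fin d) (Fin d) ℝ, U * Uᵀ = 1 →
      ∀ y, q₀ (U.mulVec y) = q₀ y)
    (hmom : Integrable (fun y : Fin d → ℝ => ‖y‖ ^ 2 * q₀ y))
    (S : Matrix (Fin d) (Fin d) ℝ) (hS : S.PosDef)
    (q : (Fin d → ℝ) → ℝ) (hq : ∀ x, q x = (S.det)⁻¹ * q₀ (S⁻¹.mulVec x))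
    (u : Fin d → ℝ) (hu : u ≠ 0) :
    (∫ y in {y : Fin d → ℝ | 0 ≤ y ⬝ᵥ u}, q y • y)
        = ((∫ y in {y : Fin d → ℝ | 0 ≤ y ⟨0, hd⟩}, y ⟨0, hd⟩ * q₀ y) /
            Real.sqrt ((S.mulVec u) ⬝ᵥ (S.mulVec u))) • ((S * S).mulVec u)
      ∧ 0 < ∫ y in {y : Fin d → ℝ | 0 ≤ y ⟨0, hd⟩}, y ⟨0, hd⟩ * q₀ y := by
  have hint := integrable_smul_self_of_integrable_norm_sq_mul hq₀nonneg
    (Integrable.of_integral_ne_zero (by rw [hq₀int]; exact one_ne_zero)) hmom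
  have hq₀ne : ¬ q₀ =ᵐ[volume] 0 := fun h => by simp [integral_congr_ae h] at hq₀int
  refine ⟨?_, setIntegral_halfSpace_coord_mul_pos hrot hq₀nonneg hint hq₀ne ⟨0, hd⟩⟩
  have hdet : 0 < S.det := hS.det_pos
  have hST : Sᵀ = S := (conjTranspose_eq_transpose_of_trivial S).symm.trans hS.isHermitian.eq
  have hSu : S *ᵥ u ≠ 0 := fun h =>
    hu (mulVec_injective_of_det_ne_zero hdet.ne' (by rw [h, mulVec_zero]))
  have hqS : ∀ z, q (S *ᵥ z) • S *ᵥ z = S.det⁻¹ • S *ᵥ (q₀ z • z) := fun z => by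
    rw [hq, mulVec_mulVec, nonsing_inv_mul S hdet.ne'.isUnit, one_mulVec, mul_smul, mulVec_smul]
  rw [setIntegral_comp_mulVec hdet.ne', preimage_mulVec_halfSpace, hST]
  simp only [hqS]
  rw [integral_smul, integral_mulVec S hint.integrableOn,
    setIntegral_halfSpace_smul_self hrot hint _ hSu, abs_of_pos hdet, smul_smul,
    mul_inv_cancel₀ hdet.ne', one_smul, mulVec_smul, mulVec_mulVec]

/-- For a proposal density `q(x) = det(Σ)^{-1/2} q₀(Σ^{-1/2}x)`, with `Σ = S·S` for a
positive definite `S` (so `Σ^{1/2} = S`) and `q₀` a rotationally invariant density with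
finite second moments, and any nonzero `u`,
`∫_{⟨y,u⟩ ≥ 0} y q(y) dy = m₁(q₀) Σu / |Σ^{1/2}u|`, where
`m₁(q₀) = ∫ y₁ 1{y₁ ≥ 0} q₀(y) dy > 0`. -/
theorem stmt10 (d : ℕ) (hd : 0 < d)
    (q₀ : (Fin d → ℝ) → ℝ) (hq₀meas : Measurable q₀)
    (hq₀nonneg : ∀ y, 0 ≤ q₀ y) (hq₀int : (∫ y, q₀ y) = 1)
    (hrot : ∀ U : Matrix (Fin d) (Fin d) ℝ, U * Uᵀ = 1 →
      ∀ y, q₀ (U.mulVec y) = q₀ y)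
    (hmom : Integrable (fun y : Fin d → ℝ => ‖y‖ ^ 2 * q₀ y))
    (S : Matrix (Fin d) (Fin d) ℝ) (hS : S.PosDef)
    (q : (Fin d → ℝ) → ℝ) (hq : ∀ x, q x = (S.det)⁻¹ * q₀ (S⁻¹.mulVec x))
    (u : Fin d → ℝ) (hu : u ≠ 0) :
    (∫ y in {y : Fin d → ℝ | 0 ≤ y ⬝ᵥ u}, q y • y)
        = ((∫ y in {y : Fin d → ℝ | 0 ≤ y ⟨0, hd⟩}, y ⟨0, hd⟩ * q₀ y) /
            Real.sqrt ((S.mulVec u) ⬝ᵥ (S.mulVec u))) • ((S * S).mulVec u)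
      ∧ 0 < ∫ y in {y : Fin d → ℝ | 0 ≤ y ⟨0, hd⟩}, y ⟨0, hd⟩ * q₀ y :=
  stmt10_general d hd q₀ hq₀nonneg hq₀int hrot hmom S hS q hq u hu
end

section
/- For δ ∈ (0,1), c > 0, and initial condition x ≠ 0 in R^d, the function μ(t;x) = [|x|^{2(1−δ)} − 2c·δ(1−δ)t]^{1/(2(1−δ))} · n(x) · 1{|x|^{2(1−δ)} ≥ 2c·δ(1−δ)t} is the Carathéodory solution of the initial value problem μ̇ = −c·δ·|μ|^{−(1−2δ)} n(μ), μ(0) = x, and it reaches 0 at time T_x = |x|^{2(1−δ)}/(2cδ(1−δ)). -/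
/-!
Along the ray through `x` the ODE `μ̇ = -g(|μ|) n(μ)` reduces to the scalar ODE `ṙ = -g(r)`
for `r = |μ|`. With `g(r) = cδ r^{-(1-2δ)}` this is solved by `r(t) = (A - a t)^p` with
`A = |x|^{2(1-δ)}`, `a = 2cδ(1-δ)`, `p = 1/(2(1-δ))`, since `a p = cδ` and `1 - 1/p = -(1-2δ)`;
clipping `A - a t` at `0` continues the solution by `0` after the extinction time `A / a`.
-/

open Filter Topology

noncomputable section

def extinctionProfile (A a p t : ℝ) : ℝ := max (A - a * t) 0 ^ p

namespace extinctionProfile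

variable {A a p t : ℝ}

theorem apply_zero (hA : 0 ≤ A) : extinctionProfile A a p 0 = A ^ p := by
  simp [extinctionProfile, hA]

theorem eq_zero_of_le (hp : 0 < p) (h : A ≤ a * t) : extinctionProfile A a p t = 0 := by
  rw [extinctionProfile, max_eq_right (by linarith), Real.zero_rpow hp.ne']

theorem eq_rpow_of_le (h : a * t ≤ A) : extinctionProfile A a p t = (A - a * t) ^ p := by
  rw [extinctionProfile, max_eq_left (by linarith)]

theorem pos_of_lt (h : a * t < A) : 0 < extinctionProfile A a p t := by
  rw [eq_rpow_of_le h.le]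
  exact Real.rpow_pos_of_pos (by linarith) p

theorem continuous (hp : 0 < p) : Continuous (extinctionProfile A a p) :=
  ((continuous_const.sub (continuous_const.mul continuous_id)).max continuous_const).rpow_const
    fun _ => Or.inr hp.le

theorem hasDerivAt (hp : p ≠ 0) (h : a * t < A) :
    HasDerivAt (extinctionProfile A a p)
      (-(a * p) * extinctionProfile A a p t ^ (1 - 1 / p)) t := by
  have hpos : 0 < A - a * t := by linarith
  have hlocal : (fun s => (A - a * s) ^ p) =ᶠ[𝓝 t] extinctionProfile A a p := by
    filter_upwards [(isOpen_lt (continuous_const.mul continuous_id) continuous_const).mem_nhds h]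
      with s hs
    exact (eq_rpow_of_le hs.le).symm
  have hlin : HasDerivAt (fun s => A - a * s) (-a) t := by
    simpa using ((hasDerivAt_id t).const_mul a).const_sub A
  refine ((hlin.rpow_const (Or.inl hpos.ne')).congr_of_eventuallyEq hlocal.symm).congr_deriv ?_
  rw [eq_rpow_of_le h.le, ← Real.rpow_mul hpos.le, mul_sub, mul_one, mul_one_div_cancel hp]
  ring

end extinctionProfile

section Radial

variable {E : Type*} [NormedAddCommGroup E] [NormedSpace ℝ E]

theorem norm_div_norm_smul (r : ℝ) {x : E} (hx : x ≠ 0) : ‖(r / ‖x‖) • x‖ = |r| := by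
  rw [norm_smul, Real.norm_eq_abs, abs_div, abs_norm, div_mul_cancel₀ _ (norm_ne_zero_iff.mpr hx)]

theorem hasDerivAt_div_norm_smul_of_hasDerivAt {f : ℝ → ℝ} {g : ℝ → ℝ} {t : ℝ} {x : E}
    (hx : x ≠ 0) (hf : HasDerivAt f (-g (f t)) t) (hft : 0 < f t) :
    HasDerivAt (fun s => (f s / ‖x‖) • x)
      (-((g ‖(f t / ‖x‖) • x‖ / ‖(f t / ‖x‖) • x‖) • (f t / ‖x‖) • x)) t := by
  refine (hf.div_const ‖x‖).smul_const x |>.congr_deriv ?_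
  rw [norm_div_norm_smul _ hx, abs_of_pos hft, smul_smul, ← neg_smul]
  field_simp

end Radial

/-- For `δ ∈ (0,1)`, `c > 0` and `x ≠ 0`, the function
`μ(t) = [|x|^{2(1−δ)} − 2cδ(1−δ)t]^{1/(2(1−δ))} n(x) 1{|x|^{2(1−δ)} ≥ 2cδ(1−δ)t}`
is the Carathéodory solution of `μ̇ = −cδ|μ|^{−(1−2δ)} n(μ)`, `μ(0) = x`: it starts at
`x`, is continuous, solves the ODE classically before the hitting time
`T_x = |x|^{2(1−δ)}/(2cδ(1−δ))` and vanishes from `T_x` on. -/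
theorem stmt13 (d : ℕ) (c δ : ℝ) (hc : 0 < c) (hδ0 : 0 < δ) (hδ1 : δ < 1)
    (x : EuclideanSpace ℝ (Fin d)) (hx : x ≠ 0)
    (μ : ℝ → EuclideanSpace ℝ (Fin d))
    (hμ : ∀ t, μ t =
      if 2 * c * δ * (1 - δ) * t ≤ ‖x‖ ^ (2 * (1 - δ)) then
        (((‖x‖ ^ (2 * (1 - δ)) - 2 * c * δ * (1 - δ) * t) ^ (1 / (2 * (1 - δ)))) / ‖x‖) • x
      else 0) :
    μ 0 = x ∧ Continuous μ ∧
      (∀ t, 0 ≤ t → t < ‖x‖ ^ (2 * (1 - δ)) / (2 * c * δ * (1 - δ)) →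
        HasDerivAt μ (-((c * δ * ‖μ t‖ ^ (-(1 - 2 * δ)) / ‖μ t‖) • μ t)) t) ∧
      (∀ t, ‖x‖ ^ (2 * (1 - δ)) / (2 * c * δ * (1 - δ)) ≤ t → μ t = 0) := by
  set A := ‖x‖ ^ (2 * (1 - δ))
  set a := 2 * c * δ * (1 - δ)
  set p := 1 / (2 * (1 - δ))
  have h1δ : 0 < 1 - δ := by linarith
  have ha : 0 < a := by positivity
  have hp : 0 < p := by positivity
  have hμ_eq : μ = fun t => (extinctionProfile A a p t / ‖x‖) • x := by
    funext t
    rw [hμ t]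
    split_ifs with h
    · rw [extinctionProfile.eq_rpow_of_le h]
    · rw [extinctionProfile.eq_zero_of_le hp (by linarith), zero_div, zero_smul]
  have hAp : A ^ p = ‖x‖ := by
    rw [← Real.rpow_mul (norm_nonneg x), mul_one_div_cancel (by linarith), Real.rpow_one]
  have hap : a * p = c * δ := by simp only [a, p]; field_simp [h1δ.ne']
  have hexp : 1 - 1 / p = -(1 - 2 * δ) := by simp only [p, one_div_one_div]; ring
  subst hμ_eq
  beta_reduce
  refine ⟨?_, (extinctionProfile.continuous hp).div_const _ |>.smul continuous_const, ?_, ?_⟩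
  · simp [extinctionProfile.apply_zero (by positivity : (0 : ℝ) ≤ A), hAp, norm_ne_zero_iff.mpr hx]
  · intro t _ ht
    have hat : a * t < A := by rwa [lt_div_iff₀' ha] at ht
    have hf := extinctionProfile.hasDerivAt (A := A) hp.ne' hat
    rw [hap, hexp, neg_mul] at hf
    exact hasDerivAt_div_norm_smul_of_hasDerivAt (g := fun r => c * δ * r ^ (-(1 - 2 * δ)))
      hx hf (extinctionProfile.pos_of_lt hat)
  · intro t ht
    rw [extinctionProfile.eq_zero_of_le hp (by rwa [div_le_iff₀' ha] at ht), zero_div, zero_smul]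
end
end

section
/- Let h(x) = −c·n(Γ⁻¹x) on the open cone C = {x ∈ R² : 0 < |x₂| < x₁}, where c > 0, Γ⁻¹ = diag(1, a²) with a² > 1, and n(y) = y/|y|. Then for any solution μ of μ̇ = h(μ) with μ(t) ∈ C on [0,T), the function t ↦ |μ(t)|² satisfies d/dt |μ(t)|² ≤ −2c|a|⁻¹|μ(t)|, and consequently |μ(t)| ≤ (|x| − c|a|⁻¹ t)₊ for 0 ≤ t ≤ |x||a|/c. -/
/-- Euclidean norm on `ℝ²` (represented as `Fin 2 → ℝ`). -/
noncomputable def nrm2 (z : Fin 2 → ℝ) : ℝ := Real.sqrt (z 0 ^ 2 + z 1 ^ 2)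

/-- The linear map `Γ⁻¹ = diag(1, a²)`. -/
noncomputable def Gmat (a : ℝ) (z : Fin 2 → ℝ) : Fin 2 → ℝ := ![z 0, a ^ 2 * z 1]

/-!
Writing `F = |μ|` and `N = |Γ⁻¹μ|`, the flow gives `d/dt F² = 2⟨μ, μ̇⟩ = -2c⟨μ, Γ⁻¹μ⟩/N`.
Since `a² ≥ 1`, the vectors `μ` and `Γ⁻¹μ` make an angle whose cosine is at least `1/|a|`,
i.e. `N F ≤ |a| ⟨μ, Γ⁻¹μ⟩`, so `d/dt F² ≤ -2cF/|a|`. Dividing by `2F > 0` gives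
`Ḟ ≤ -c/|a|`, and the mean value inequality integrates this to `F(t) ≤ F(0) - c t/|a|`.
-/

open Set Matrix

@[simp]
lemma Gmat_zero (a : ℝ) (z : Fin 2 → ℝ) : Gmat a z 0 = z 0 := rfl

@[simp]
lemma Gmat_one (a : ℝ) (z : Fin 2 → ℝ) : Gmat a z 1 = a ^ 2 * z 1 := rfl

lemma dotProduct_fin_two (x y : Fin 2 → ℝ) : x ⬝ᵥ y = x 0 * y 0 + x 1 * y 1 := by
  simp [dotProduct, Fin.sum_univ_two]

lemma nrm2_nonneg (z : Fin 2 → ℝ) : 0 ≤ nrm2 z := Real.sqrt_nonneg _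

lemma nrm2_sq (z : Fin 2 → ℝ) : nrm2 z ^ 2 = z 0 ^ 2 + z 1 ^ 2 :=
  Real.sq_sqrt (by positivity)

lemma nrm2_pos_of_one_ne_zero {z : Fin 2 → ℝ} (hz : z 1 ≠ 0) : 0 < nrm2 z :=
  Real.sqrt_pos.mpr (by positivity)

lemma nrm2_Gmat_mul_nrm2_le {a : ℝ} (ha : 1 ≤ a ^ 2) (z : Fin 2 → ℝ) :
    nrm2 (Gmat a z) * nrm2 z ≤ |a| * (z ⬝ᵥ Gmat a z) := by
  have hdot : 0 ≤ z ⬝ᵥ Gmat a z := by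
    rw [dotProduct_fin_two, Gmat_zero, Gmat_one]
    nlinarith [sq_nonneg (z 0), mul_nonneg (sq_nonneg a) (sq_nonneg (z 1))]
  refine (pow_le_pow_iff_left₀ (mul_nonneg (nrm2_nonneg _) (nrm2_nonneg _))
    (mul_nonneg (abs_nonneg a) hdot) two_ne_zero).mp ?_
  rw [mul_pow, mul_pow, nrm2_sq, nrm2_sq, sq_abs, dotProduct_fin_two, Gmat_zero, Gmat_one]
  have ha0 : 0 ≤ a ^ 2 - 1 := by linarith
  nlinarith [mul_nonneg ha0 (sq_nonneg (z 0 ^ 2)), mul_nonneg ha0 (sq_nonneg (z 0 * z 1)),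
    mul_nonneg (mul_nonneg ha0 (sq_nonneg a)) (sq_nonneg (z 0 * z 1)),
    mul_nonneg (mul_nonneg ha0 (sq_nonneg (a ^ 2))) (sq_nonneg (z 1 ^ 2))]

lemma HasDerivAt.nrm2_sq {μ : ℝ → Fin 2 → ℝ} {v : Fin 2 → ℝ} {t : ℝ} (hμ : HasDerivAt μ v t) :
    HasDerivAt (fun s => nrm2 (μ s) ^ 2) (2 * (μ t ⬝ᵥ v)) t := by
  have h0 : HasDerivAt (fun s => μ s 0) (v 0) t := hasDerivAt_pi.mp hμ 0
  have h1 : HasDerivAt (fun s => μ s 1) (v 1) t := hasDerivAt_pi.mp hμ 1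
  rw [show (fun s => nrm2 (μ s) ^ 2) = fun s => μ s 0 ^ 2 + μ s 1 ^ 2 from
    funext fun s => _root_.nrm2_sq (μ s)]
  refine ((h0.pow 2).add (h1.pow 2)).congr_deriv ?_
  rw [dotProduct_fin_two]
  ring

lemma two_mul_dotProduct_flow_le {a c : ℝ} (ha : 1 ≤ a ^ 2) (hc : 0 ≤ c) {x : Fin 2 → ℝ}
    (hN : 0 < nrm2 (Gmat a x)) :
    2 * (x ⬝ᵥ -((c / nrm2 (Gmat a x)) • Gmat a x)) ≤ -(2 * c * |a|⁻¹ * nrm2 x) := by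
  have ha' : 0 < |a| := abs_pos.mpr (by rintro rfl; norm_num at ha)
  have key := nrm2_Gmat_mul_nrm2_le ha x
  rw [dotProduct_neg, dotProduct_smul, smul_eq_mul]
  have : c * |a|⁻¹ * nrm2 x ≤ c / nrm2 (Gmat a x) * (x ⬝ᵥ Gmat a x) := by
    rw [div_mul_eq_mul_div, le_div_iff₀ hN, mul_assoc c, mul_assoc c]
    gcongr
    rw [mul_assoc, inv_mul_le_iff₀ ha', mul_comm (nrm2 x)]
    exact key
  linarith

lemma exists_hasDerivAt_le_of_sq {f : ℝ → ℝ} {t D k : ℝ} (hf : ∀ s, 0 ≤ f s) (ht : 0 < f t)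
    (hD : HasDerivAt (fun s => f s ^ 2) D t) (hle : D ≤ -(2 * k * f t)) :
    ∃ D', HasDerivAt f D' t ∧ D' ≤ -k := by
  have hsqrt := hD.sqrt (by positivity)
  simp only [Real.sqrt_sq (hf _)] at hsqrt
  refine ⟨_, hsqrt, ?_⟩
  rw [div_le_iff₀ (by positivity)]
  linarith

lemma Convex.sub_le_mul_sub_of_hasDerivAt_le {s : Set ℝ} (hs : Convex ℝ s) {f : ℝ → ℝ} {C : ℝ}
    (hf : ∀ x ∈ s, ∃ D, HasDerivAt f D x ∧ D ≤ C) {x y : ℝ} (hx : x ∈ s) (hy : y ∈ s)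
    (hxy : x ≤ y) : f y - f x ≤ C * (y - x) := by
  choose f' hf' hf'C using hf
  refine hs.image_sub_le_mul_sub_of_deriv_le
    (fun z hz => (hf' z hz).continuousAt.continuousWithinAt)
    (fun z hz => (hf' z (interior_subset hz)).differentiableAt.differentiableWithinAt)
    (fun z hz => ?_) x hx y hy hxy
  rw [(hf' z (interior_subset hz)).deriv]
  exact hf'C z _

theorem stmt14_general (a c T : ℝ) (ha : 1 < a ^ 2) (hc : 0 < c)
    (μ : ℝ → (Fin 2 → ℝ))
    (hcone : ∀ t, 0 ≤ t → t < T → 0 < |μ t 1| ∧ |μ t 1| < μ t 0)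
    (hode : ∀ t, 0 ≤ t → t < T →
      HasDerivAt μ (-((c / nrm2 (Gmat a (μ t))) • Gmat a (μ t))) t) :
    (∀ t, 0 ≤ t → t < T →
      ∃ D : ℝ, HasDerivAt (fun s => nrm2 (μ s) ^ 2) D t ∧
        D ≤ -(2 * c * |a|⁻¹ * nrm2 (μ t))) ∧
    (∀ t, 0 ≤ t → t < T → t ≤ nrm2 (μ 0) * |a| / c →
      nrm2 (μ t) ≤ max (nrm2 (μ 0) - c * |a|⁻¹ * t) 0) := by
  have hne : ∀ t, 0 ≤ t → t < T → μ t 1 ≠ 0 := fun t h0 htT =>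
    abs_pos.mp (hcone t h0 htT).1
  have hsq : ∀ t, 0 ≤ t → t < T → ∃ D : ℝ, HasDerivAt (fun s => nrm2 (μ s) ^ 2) D t ∧
      D ≤ -(2 * c * |a|⁻¹ * nrm2 (μ t)) := by
    intro t h0 htT
    have hN : 0 < nrm2 (Gmat a (μ t)) := nrm2_pos_of_one_ne_zero <| by
      rw [Gmat_one]
      exact mul_ne_zero (by positivity) (hne t h0 htT)
    exact ⟨_, (hode t h0 htT).nrm2_sq, two_mul_dotProduct_flow_le ha.le hc.le hN⟩
  refine ⟨hsq, fun t h0 htT _ => ?_⟩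
  have hnrm : ∀ s ∈ Ico 0 T,
      ∃ D, HasDerivAt (fun r => nrm2 (μ r)) D s ∧ D ≤ -(c * |a|⁻¹) := by
    rintro s ⟨hs0, hsT⟩
    obtain ⟨D, hD, hDle⟩ := hsq s hs0 hsT
    exact exists_hasDerivAt_le_of_sq (fun _ => nrm2_nonneg _)
      (nrm2_pos_of_one_ne_zero (hne s hs0 hsT)) hD (by rwa [← mul_assoc])
  have hdecay := (convex_Ico 0 T).sub_le_mul_sub_of_hasDerivAt_le hnrm
    ⟨le_rfl, h0.trans_lt htT⟩ ⟨h0, htT⟩ h0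
  exact le_max_of_le_left (by linarith)

/-- For `h(x) = −c n(Γ⁻¹x)` on the cone `C = {0 < |x₂| < x₁}` with `Γ⁻¹ = diag(1,a²)`,
`a² > 1`: along any solution of `μ̇ = h(μ)` staying in `C` on `[0,T)`, the squared norm
satisfies `d/dt |μ(t)|² ≤ −2c|a|⁻¹|μ(t)|`, and consequently
`|μ(t)| ≤ (|μ(0)| − c|a|⁻¹ t)₊` for `0 ≤ t ≤ |μ(0)||a|/c`. -/
theorem stmt14 (a c T : ℝ) (ha : 1 < a ^ 2) (hc : 0 < c) (hT : 0 < T)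
    (μ : ℝ → (Fin 2 → ℝ))
    (hcone : ∀ t, 0 ≤ t → t < T → 0 < |μ t 1| ∧ |μ t 1| < μ t 0)
    (hode : ∀ t, 0 ≤ t → t < T →
      HasDerivAt μ (-((c / nrm2 (Gmat a (μ t))) • Gmat a (μ t))) t) :
    (∀ t, 0 ≤ t → t < T →
      ∃ D : ℝ, HasDerivAt (fun s => nrm2 (μ s) ^ 2) D t ∧
        D ≤ -(2 * c * |a|⁻¹ * nrm2 (μ t))) ∧
    (∀ t, 0 ≤ t → t < T → t ≤ nrm2 (μ 0) * |a| / c →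
      nrm2 (μ t) ≤ max (nrm2 (μ 0) - c * |a|⁻¹ * t) 0) :=
  stmt14_general a c T ha hc μ hcone hode
end

section
/- Let π(x) ∝ α exp(−½ x'Γ₁⁻¹x) + (1−α) exp(−½ x'Γ₂⁻¹x) on R², with Γ₁⁻¹ = diag(a²,1), Γ₂⁻¹ = diag(1,a²), a² > 1, α ∈ (0,1). Then for x = (x₁,x₂) with |x₁| − |x₂| ≥ 2M and any y with |y| ≤ M (so that |x₁+y₁| ≥ |x₂+y₂|), the ratio satisfies (1−α)exp(−½ y'Γ₂⁻¹y − x'Γ₂⁻¹y) ≤ π(x+y)/π(x) ≤ (1−α)^{-1} exp(−½ y'Γ₂⁻¹y − x'Γ₂⁻¹y). -/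
private lemma ratio_bounds (α c E F P Q : ℝ) (h1α : 0 < 1 - α) (hE : 0 < E)
    (hF : F = Real.exp c * E) (hP1 : (1 - α) * E ≤ P) (hP2 : P ≤ E)
    (hQ1 : (1 - α) * F ≤ Q) (hQ2 : Q ≤ F) :
    (1 - α) * Real.exp c ≤ Q / P ∧ Q / P ≤ (1 - α)⁻¹ * Real.exp c := by
  have hP : 0 < P := lt_of_lt_of_le (by positivity) hP1
  have hec := Real.exp_pos c
  constructor
  · rw [le_div_iff₀ hP]
    calc (1 - α) * Real.exp c * P ≤ (1 - α) * Real.exp c * E :=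
          mul_le_mul_of_nonneg_left hP2 (by positivity)
      _ = (1 - α) * F := by rw [hF]; ring
      _ ≤ Q := hQ1
  · rw [div_le_iff₀ hP]
    have h5 : E ≤ (1 - α)⁻¹ * P := by
      rw [le_inv_mul_iff₀ h1α]; linarith
    calc Q ≤ F := hQ2
      _ = Real.exp c * E := hF
      _ ≤ Real.exp c * ((1 - α)⁻¹ * P) := mul_le_mul_of_nonneg_left h5 hec.le
      _ = (1 - α)⁻¹ * Real.exp c * P := by ring

/-- Two-sided bound on the acceptance ratio for a two-component Gaussian mixture
`π(z) ∝ α exp(−½ z'Γ₁⁻¹z) + (1−α) exp(−½ z'Γ₂⁻¹z)` with `Γ₁⁻¹ = diag(a²,1)`,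
`Γ₂⁻¹ = diag(1,a²)`, `a² > 1`: if `|x₁| − |x₂| ≥ 2M` and `|y| ≤ M`, then
`(1−α) e^{−½ y'Γ₂⁻¹y − x'Γ₂⁻¹y} ≤ π(x+y)/π(x) ≤ (1−α)⁻¹ e^{−½ y'Γ₂⁻¹y − x'Γ₂⁻¹y}`. -/
theorem stmt15 (a α M x1 x2 y1 y2 : ℝ) (ha : 1 < a ^ 2)
    (hα0 : 0 < α) (hα1 : α < 1) (hM : 0 < M)
    (hx : 2 * M ≤ |x1| - |x2|) (hy : Real.sqrt (y1 ^ 2 + y2 ^ 2) ≤ M)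
    (πf : ℝ → ℝ → ℝ)
    (hπ : ∀ z1 z2, πf z1 z2 =
      α * Real.exp (-(1 / 2) * (a ^ 2 * z1 ^ 2 + z2 ^ 2))
        + (1 - α) * Real.exp (-(1 / 2) * (z1 ^ 2 + a ^ 2 * z2 ^ 2))) :
    (1 - α) * Real.exp (-(1 / 2) * (y1 ^ 2 + a ^ 2 * y2 ^ 2)
          - (x1 * y1 + a ^ 2 * x2 * y2))
        ≤ πf (x1 + y1) (x2 + y2) / πf x1 x2
    ∧ πf (x1 + y1) (x2 + y2) / πf x1 x2
        ≤ (1 - α)⁻¹ * Real.exp (-(1 / 2) * (y1 ^ 2 + a ^ 2 * y2 ^ 2)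
            - (x1 * y1 + a ^ 2 * x2 * y2)) := by
  have h1α : (0:ℝ) < 1 - α := by linarith
  have hy1 : |y1| ≤ M := by
    have h1 : |y1| = Real.sqrt (y1 ^ 2) := (Real.sqrt_sq_eq_abs y1).symm
    have h2 : Real.sqrt (y1 ^ 2) ≤ Real.sqrt (y1 ^ 2 + y2 ^ 2) :=
      Real.sqrt_le_sqrt (by nlinarith [sq_nonneg y2])
    linarith [h1 ▸ (h2.trans hy)]
  have hy2 : |y2| ≤ M := by
    have h1 : |y2| = Real.sqrt (y2 ^ 2) := (Real.sqrt_sq_eq_abs y2).symm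
    have h2 : Real.sqrt (y2 ^ 2) ≤ Real.sqrt (y1 ^ 2 + y2 ^ 2) :=
      Real.sqrt_le_sqrt (by nlinarith [sq_nonneg y1])
    linarith [h1 ▸ (h2.trans hy)]
  have habs : |x2 + y2| ≤ |x1 + y1| := by
    have h3 : |x1| ≤ |x1 + y1| + |y1| := by
      calc |x1| = |(x1 + y1) + (-y1)| := by ring_nf
        _ ≤ |x1 + y1| + |(-y1)| := abs_add_le _ _
        _ = |x1 + y1| + |y1| := by rw [abs_neg]
    have h4 := abs_add_le x2 y2
    linarith
  have hsq1 : x2 ^ 2 ≤ x1 ^ 2 := by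
    have h : |x2| ≤ |x1| := by linarith
    nlinarith [abs_nonneg x2, sq_abs x1, sq_abs x2, mul_self_le_mul_self (abs_nonneg x2) h]
  have hsq2 : (x2 + y2) ^ 2 ≤ (x1 + y1) ^ 2 := by
    nlinarith [abs_nonneg (x2 + y2), sq_abs (x1 + y1), sq_abs (x2 + y2),
      mul_self_le_mul_self (abs_nonneg (x2 + y2)) habs]
  have hE1x : Real.exp (-(1 / 2) * (a ^ 2 * x1 ^ 2 + x2 ^ 2))
      ≤ Real.exp (-(1 / 2) * (x1 ^ 2 + a ^ 2 * x2 ^ 2)) := by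
    apply Real.exp_le_exp.mpr; nlinarith
  have hE1xy : Real.exp (-(1 / 2) * (a ^ 2 * (x1 + y1) ^ 2 + (x2 + y2) ^ 2))
      ≤ Real.exp (-(1 / 2) * ((x1 + y1) ^ 2 + a ^ 2 * (x2 + y2) ^ 2)) := by
    apply Real.exp_le_exp.mpr; nlinarith
  apply ratio_bounds α _ (Real.exp (-(1 / 2) * (x1 ^ 2 + a ^ 2 * x2 ^ 2)))
      (Real.exp (-(1 / 2) * ((x1 + y1) ^ 2 + a ^ 2 * (x2 + y2) ^ 2))) _ _ h1α
      (Real.exp_pos _)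
  · rw [← Real.exp_add]; congr 1; ring
  · rw [hπ]
    have := mul_pos hα0 (Real.exp_pos (-(1 / 2) * (a ^ 2 * x1 ^ 2 + x2 ^ 2)))
    linarith
  · rw [hπ]
    have := mul_le_mul_of_nonneg_left hE1x hα0.le
    linarith
  · rw [hπ]
    have := mul_pos hα0 (Real.exp_pos (-(1 / 2) * (a ^ 2 * (x1 + y1) ^ 2 + (x2 + y2) ^ 2)))
    linarith
  · rw [hπ]
    have := mul_le_mul_of_nonneg_left hE1xy hα0.le
    linarith
end

section
/- Let {Φ_k} be a Markov chain on R^d, ρ ∈ (0,1), T, β > 0, and define stopping times σ = inf{k ≥ 0 : |Φ_k| < ρ|Φ₀|} and τ = σ ∧ ⌈T|Φ₀|^{1+β}⌉. Assume (i) lim sup_{|x|→∞} P_x(σ > τ) = 0, (ii) sup_{|x|≥1} |x|^{-p} E_x[|Φ_{⌈T|Φ₀|^{1+β}⌉}|^p 1{|Φ_{⌈T|Φ₀|^{1+β}⌉}| ≥ K|Φ₀|}] < 1 − ρ^p for some K. Then there exists M such that sup_{|x| ≥ M} |x|^{-p} E_x[|Φ_τ|^p] < 1. -/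
open MeasureTheory ENNReal Filter

/-- Geometric drift at the stopping time `τ = σ ∧ ⌈T|Φ₀|^{1+β}⌉`, where
`σ = inf{k : |Φ_k| < ρ|Φ₀|}`: if (i) `P_x(σ > τ) → 0` as `|x| → ∞` and (ii) the
truncated `p`-th moment of `Φ` at the horizon is uniformly `< (1−ρ^p)|x|^p` for some
truncation level `K`, then there is `M` with `sup_{|x|≥M} |x|^{-p} E_x[|Φ_τ|^p] < 1`. -/
theorem stmt18 (d : ℕ) (p ρ T β : ℝ) (hp : 0 < p) (hρ0 : 0 < ρ) (hρ1 : ρ < 1)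
    (hT : 0 < T) (hβ : 0 < β)
    (ℙ : EuclideanSpace ℝ (Fin d) → Measure (ℕ → EuclideanSpace ℝ (Fin d)))
    (hprob : ∀ x, IsProbabilityMeasure (ℙ x))
    (hstart : ∀ x, (ℙ x) {ω | ω 0 = x} = 1)
    (Tn : EuclideanSpace ℝ (Fin d) → ℕ)
    (hTn : ∀ x, Tn x = ⌈T * ‖x‖ ^ (1 + β)⌉₊)
    (τ : (ℕ → EuclideanSpace ℝ (Fin d)) → ℕ)
    (hτhit : ∀ ω, (∃ k ≤ Tn (ω 0), ‖ω k‖ < ρ * ‖ω 0‖) →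
      τ ω = sInf {k | ‖ω k‖ < ρ * ‖ω 0‖})
    (hτmiss : ∀ ω, ¬(∃ k ≤ Tn (ω 0), ‖ω k‖ < ρ * ‖ω 0‖) → τ ω = Tn (ω 0))
    (hi : Tendsto (fun x => (ℙ x) {ω | ∀ k ≤ Tn x, ρ * ‖ω 0‖ ≤ ‖ω k‖})
      (comap norm atTop) (nhds 0))
    (hii : ∃ K c : ℝ, c < 1 - ρ ^ p ∧ ∀ x, 1 ≤ ‖x‖ →
      (∫⁻ ω in {ω | K * ‖ω 0‖ ≤ ‖ω (Tn x)‖}, ENNReal.ofReal (‖ω (Tn x)‖ ^ p) ∂ℙ x)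
        ≤ ENNReal.ofReal (c * ‖x‖ ^ p)) :
    ∃ M : ℝ, ∀ x, M ≤ ‖x‖ →
      (∫⁻ ω, ENNReal.ofReal (‖ω (τ ω)‖ ^ p) ∂ℙ x) < ENNReal.ofReal (‖x‖ ^ p) := by
  classical
  obtain ⟨K, c₀, hc₀, hK⟩ := hii
  have hρp1 : ρ ^ p < 1 := Real.rpow_lt_one hρ0.le hρ1 hp
  set c := max c₀ 0 with hcdef
  have hc : c < 1 - ρ ^ p := max_lt hc₀ (by linarith)
  have hc0 : 0 ≤ c := le_max_right _ _
  set Kp := max K 0 with hKpdef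
  have hKp0 : 0 ≤ Kp := le_max_right _ _
  have hKpp0 : 0 ≤ Kp ^ p := Real.rpow_nonneg hKp0 _
  set ε := (1 - ρ ^ p - c) / (Kp ^ p + 1) with hεdef
  have hε0 : 0 < ε := div_pos (by linarith) (by linarith)
  have hεnn : 0 ≤ ε := hε0.le
  have hcoef : ρ ^ p + c + Kp ^ p * ε < 1 := by
    have h1 : Kp ^ p * ε < 1 - ρ ^ p - c := by
      rw [hεdef, mul_div_assoc']
      rw [div_lt_iff₀ (by linarith)]
      nlinarith
    linarith
  have hρpnn : 0 ≤ ρ ^ p := Real.rpow_nonneg hρ0.le _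
  have hev : ∀ᶠ r in atTop, ∀ x : EuclideanSpace ℝ (Fin d), ‖x‖ = r →
      (ℙ x) {ω | ∀ k ≤ Tn x, ρ * ‖ω 0‖ ≤ ‖ω k‖} < ENNReal.ofReal ε := by
    have h := hi.eventually (Iio_mem_nhds (show (0:ℝ≥0∞) < ENNReal.ofReal ε from
      ENNReal.ofReal_pos.2 hε0))
    rw [eventually_comap] at h
    exact h
  obtain ⟨M₀, hM₀⟩ := eventually_atTop.1 hev
  refine ⟨max M₀ 1, fun x hx => ?_⟩
  haveI := hprob x
  have hx1 : 1 ≤ ‖x‖ := le_trans (le_max_right _ _) hx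
  have hxp0 : 0 < ‖x‖ ^ p := Real.rpow_pos_of_pos (lt_of_lt_of_le one_pos hx1) _
  have hxpnn : 0 ≤ ‖x‖ ^ p := hxp0.le
  have hxM : (ℙ x) {ω | ∀ k ≤ Tn x, ρ * ‖ω 0‖ ≤ ‖ω k‖} ≤ ENNReal.ofReal ε :=
    (hM₀ ‖x‖ (le_trans (le_max_left _ _) hx) x rfl).le
  set Big : Set (ℕ → EuclideanSpace ℝ (Fin d)) := {ω | K * ‖ω 0‖ ≤ ‖ω (Tn x)‖} with hBig
  set Miss : Set (ℕ → EuclideanSpace ℝ (Fin d)) := {ω | ∀ k ≤ Tn x, ρ * ‖ω 0‖ ≤ ‖ω k‖}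
    with hMiss
  have hBigm : MeasurableSet Big :=
    measurableSet_le (measurable_const.mul (measurable_pi_apply 0).norm)
      (measurable_pi_apply (Tn x)).norm
  have hMissm : MeasurableSet Miss := by
    have heq : Miss = ⋂ k, ⋂ (_ : k ≤ Tn x), {ω : ℕ → EuclideanSpace ℝ (Fin d) |
        ρ * ‖ω 0‖ ≤ ‖ω k‖} := by
      ext ω; simp [hMiss, Set.mem_iInter]
    rw [heq]
    exact MeasurableSet.iInter fun k => MeasurableSet.iInter fun _ =>
      measurableSet_le (measurable_const.mul (measurable_pi_apply 0).norm)
        (measurable_pi_apply k).norm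
  have hAc : (ℙ x) {ω | ω 0 = x}ᶜ = 0 := by
    have hm : MeasurableSet {ω : ℕ → EuclideanSpace ℝ (Fin d) | ω 0 = x} := by
      have h2 : {ω : ℕ → EuclideanSpace ℝ (Fin d) | ω 0 = x}
          = (fun ω : ℕ → EuclideanSpace ℝ (Fin d) => ω 0) ⁻¹' {x} := rfl
      rw [h2]
      exact (measurable_pi_apply 0) (measurableSet_singleton x)
    rw [measure_compl hm (measure_ne_top _ _), hstart x, measure_univ, tsub_self]
  have hae : ∀ᵐ ω ∂ℙ x, ω 0 = x := by
    rw [ae_iff]; exact hAc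
  set F : (ℕ → EuclideanSpace ℝ (Fin d)) → ℝ≥0∞ := fun ω =>
    ENNReal.ofReal (ρ ^ p * ‖x‖ ^ p)
      + Big.indicator (fun ω => ENNReal.ofReal (‖ω (Tn x)‖ ^ p)) ω
      + Miss.indicator (fun _ => ENNReal.ofReal (Kp ^ p * ‖x‖ ^ p)) ω with hF
  have hptw : ∀ᵐ ω ∂ℙ x, ENNReal.ofReal (‖ω (τ ω)‖ ^ p) ≤ F ω := by
    filter_upwards [hae] with ω hω
    by_cases hhit : ∃ k ≤ Tn (ω 0), ‖ω k‖ < ρ * ‖ω 0‖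
    · have hτ := hτhit ω hhit
      obtain ⟨k, hk, hlt⟩ := hhit
      have hmem : τ ω ∈ {k | ‖ω k‖ < ρ * ‖ω 0‖} := by
        rw [hτ]; exact Nat.sInf_mem ⟨k, hlt⟩
      have hbd : ‖ω (τ ω)‖ ^ p ≤ ρ ^ p * ‖x‖ ^ p := by
        rw [← Real.mul_rpow hρ0.le (norm_nonneg x)]
        refine Real.rpow_le_rpow (norm_nonneg _) ?_ hp.le
        have := hmem.out
        rw [hω] at this
        exact this.le
      exact le_trans (le_trans (ENNReal.ofReal_le_ofReal hbd) le_self_add) le_self_add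
    · have hτ := hτmiss ω hhit
      rw [hω] at hτ
      by_cases hb : ω ∈ Big
      · have hind : Big.indicator (fun ω => ENNReal.ofReal (‖ω (Tn x)‖ ^ p)) ω
            = ENNReal.ofReal (‖ω (Tn x)‖ ^ p) := Set.indicator_of_mem hb _
        rw [hτ, hF]
        rw [← hind]
        exact le_trans le_add_self le_self_add
      · have hmiss : ω ∈ Miss := by
          push_neg at hhit
          intro k hk
          exact hhit k (by rwa [hω])
        have hblt : ‖ω (Tn x)‖ < K * ‖x‖ := by
          have hb' : ¬ K * ‖ω 0‖ ≤ ‖ω (Tn x)‖ := hb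
          have := not_le.1 hb'
          rwa [hω] at this
        have hbd : ‖ω (τ ω)‖ ^ p ≤ Kp ^ p * ‖x‖ ^ p := by
          rw [hτ, ← Real.mul_rpow hKp0 (norm_nonneg x)]
          refine Real.rpow_le_rpow (norm_nonneg _) ?_ hp.le
          exact le_trans hblt.le (mul_le_mul_of_nonneg_right (le_max_left _ _) (norm_nonneg x))
        have hind : Miss.indicator
            (fun _ : ℕ → EuclideanSpace ℝ (Fin d) => ENNReal.ofReal (Kp ^ p * ‖x‖ ^ p)) ω
            = ENNReal.ofReal (Kp ^ p * ‖x‖ ^ p) := Set.indicator_of_mem hmiss _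
        rw [hF]
        calc ENNReal.ofReal (‖ω (τ ω)‖ ^ p) ≤ ENNReal.ofReal (Kp ^ p * ‖x‖ ^ p) :=
              ENNReal.ofReal_le_ofReal hbd
          _ = Miss.indicator (fun _ => ENNReal.ofReal (Kp ^ p * ‖x‖ ^ p)) ω := hind.symm
          _ ≤ _ := le_add_self
  have hmeas2 : Measurable (Big.indicator
      (fun ω : ℕ → EuclideanSpace ℝ (Fin d) => ENNReal.ofReal (‖ω (Tn x)‖ ^ p))) := by
    refine Measurable.indicator ?_ hBigm
    exact ((measurable_pi_apply (Tn x)).norm.pow measurable_const).ennreal_ofReal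
  have hmeas3 : Measurable (Miss.indicator
      (fun _ : ℕ → EuclideanSpace ℝ (Fin d) => ENNReal.ofReal (Kp ^ p * ‖x‖ ^ p))) :=
    measurable_const.indicator hMissm
  calc ∫⁻ ω, ENNReal.ofReal (‖ω (τ ω)‖ ^ p) ∂ℙ x ≤ ∫⁻ ω, F ω ∂ℙ x := lintegral_mono_ae hptw
    _ = ENNReal.ofReal (ρ ^ p * ‖x‖ ^ p)
        + (∫⁻ ω in Big, ENNReal.ofReal (‖ω (Tn x)‖ ^ p) ∂ℙ x)
        + ENNReal.ofReal (Kp ^ p * ‖x‖ ^ p) * (ℙ x) Miss := by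
      rw [hF]
      rw [lintegral_add_right _ hmeas3, lintegral_add_right _ hmeas2, lintegral_const,
        measure_univ, mul_one, lintegral_indicator hBigm, lintegral_indicator_const hMissm]
    _ ≤ ENNReal.ofReal (ρ ^ p * ‖x‖ ^ p) + ENNReal.ofReal (c * ‖x‖ ^ p)
        + ENNReal.ofReal (Kp ^ p * ‖x‖ ^ p) * ENNReal.ofReal ε := by
      refine add_le_add (add_le_add le_rfl ?_) ?_
      · refine le_trans (hK x hx1) (ENNReal.ofReal_le_ofReal ?_)
        exact mul_le_mul_of_nonneg_right (le_max_left _ _) hxpnn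
      · exact mul_le_mul_right hxM _
    _ = ENNReal.ofReal ((ρ ^ p + c + Kp ^ p * ε) * ‖x‖ ^ p) := by
      rw [← ENNReal.ofReal_mul (mul_nonneg hKpp0 hxpnn),
        ← ENNReal.ofReal_add (mul_nonneg hρpnn hxpnn) (mul_nonneg hc0 hxpnn),
        ← ENNReal.ofReal_add (add_nonneg (mul_nonneg hρpnn hxpnn) (mul_nonneg hc0 hxpnn))
          (mul_nonneg (mul_nonneg hKpp0 hxpnn) hεnn)]
      ring_nf
    _ < ENNReal.ofReal (‖x‖ ^ p) := by
      rw [ENNReal.ofReal_lt_ofReal_iff hxp0]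
      simpa using mul_lt_mul_of_pos_right hcoef hxp0
end
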